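/- arXiv:1904.06468 — 10 statements merged into one kernel-verified Lean document; each statement's English description precedes it below -/
import Mathlib

section
/- Let M be a cancellative commutative monoid and N an order-ideal of M (i.e., a submonoid such that a ≤ b and b ∈ N implies a ∈ N, where a ≤ b means b = a + c for some c). If 0 → N → M → P → 0 is a short exact sequence of commutative monoids (the first map injective, the second surjective with 'kernel congruence' given by N), then the induced sequence of group completions 0 → N⁺ → M⁺ → P⁺ → 0 is a short exact sequence of abelian groups. -/
/-- `(G, η)` is the group completion (Grothendieck group) of the commutative monoid `M`:
every element of `G` is a difference of images of `η`, and `η a = η b` iff `a` and `b`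
become equal after adding some element of `M`. -/
def IsGroupCompletion {M G : Type*} [AddCommMonoid M] [AddCommGroup G]
    (η : M →+ G) : Prop :=
  (∀ x : G, ∃ a b : M, x = η a - η b) ∧ ∀ a b : M, η a = η b ↔ ∃ k : M, a + k = b + k

/-- let `M` be a cancellative commutative monoid, `N` an order-ideal of `M`
(via the injective monoid map `l`), and `0 → N → M → P → 0` a short exact sequence of
commutative monoids.  Then the induced sequence of group completions
`0 → N⁺ → M⁺ → P⁺ → 0` is a short exact sequence of abelian groups. -/
theorem stmt_0 {N M P : Type*} [AddCommMonoid N] [AddCancelCommMonoid M] [AddCommMonoid P]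
    (l : N →+ M) (t : M →+ P)
    (hl : Function.Injective l) (ht : Function.Surjective t)
    -- `N` is (identified via `l` with) an order-ideal of `M`:
    (hhered : ∀ a c : M, a + c ∈ Set.range l → a ∈ Set.range l)
    -- exactness of the sequence of monoids at `M`:
    (hexact : ∀ a b : M, t a = t b ↔ ∃ i j : N, a + l i = b + l j)
    {GN GM GP : Type*} [AddCommGroup GN] [AddCommGroup GM] [AddCommGroup GP]
    (ηN : N →+ GN) (ηM : M →+ GM) (ηP : P →+ GP)
    (hGN : IsGroupCompletion ηN) (hGM : IsGroupCompletion ηM) (hGP : IsGroupCompletion ηP)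
    -- the induced maps on group completions:
    (lplus : GN →+ GM) (tplus : GM →+ GP)
    (hlplus : ∀ a : N, lplus (ηN a) = ηM (l a))
    (htplus : ∀ a : M, tplus (ηM a) = ηP (t a)) :
    Function.Injective lplus ∧ Function.Surjective tplus ∧
      ∀ x : GM, tplus x = 0 ↔ x ∈ Set.range lplus := by
  obtain ⟨hGNsur, hGNeq⟩ := hGN
  obtain ⟨hGMsur, hGMeq⟩ := hGM
  obtain ⟨hGPsur, hGPeq⟩ := hGP
  -- ηM is injective since M is cancellative
  have hηM : Function.Injective ηM := fun a b h => by
    obtain ⟨k, hk⟩ := (hGMeq a b).mp h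
    exact add_right_cancel hk
  refine ⟨?_, ?_, ?_⟩
  · -- injectivity of lplus
    rw [injective_iff_map_eq_zero]
    intro x hx
    obtain ⟨a, b, rfl⟩ := hGNsur x
    rw [map_sub, hlplus, hlplus, sub_eq_zero] at hx
    have := hηM hx
    rw [hl this, sub_self]
  · -- surjectivity of tplus
    intro x
    obtain ⟨p, q, rfl⟩ := hGPsur x
    obtain ⟨a, ha⟩ := ht p
    obtain ⟨b, hb⟩ := ht q
    exact ⟨ηM a - ηM b, by rw [map_sub, htplus, htplus, ha, hb]⟩
  · intro x
    constructor
    · intro hx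
      obtain ⟨a, b, rfl⟩ := hGMsur x
      rw [map_sub, htplus, htplus, sub_eq_zero] at hx
      obtain ⟨k, hk⟩ := (hGPeq _ _).mp hx
      obtain ⟨c, rfl⟩ := ht k
      rw [← map_add, ← map_add] at hk
      obtain ⟨i, j, hij⟩ := (hexact _ _).mp hk
      refine ⟨ηN j - ηN i, ?_⟩
      have h2 : a + l i = b + l j := by
        rw [add_right_comm a c, add_right_comm b c] at hij
        exact add_right_cancel hij
      rw [map_sub, hlplus, hlplus, sub_eq_sub_iff_add_eq_add, ← map_add, ← map_add]
      exact congrArg ηM (by rw [add_comm (l j) b, ← h2])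
    · rintro ⟨y, rfl⟩
      obtain ⟨i, j, rfl⟩ := hGNsur y
      rw [map_sub, hlplus, hlplus, map_sub, htplus, htplus]
      have hti : ∀ n : N, t (l n) = 0 := fun n => by
        have : t (l n) = t 0 := (hexact _ _).mpr ⟨0, n, by simp⟩
        simpa using this
      rw [hti, hti, sub_self]
end

section
/- Let A be an n×n matrix with nonnegative integer entries, and let B be an m×m matrix with nonnegative integer entries. A and B are shift equivalent (there exist nonnegative integer matrices R (n×m) and S (m×n) and a positive integer ℓ with AR = RB, SA = BS, A^ℓ = RS, B^ℓ = SR) if and only if their Krieger dimension triples (Δ_A, Δ_A⁺, δ_A) and (Δ_B, Δ_B⁺, δ_B) are isomorphic, where Δ_A = colim(ℤⁿ →^A ℤⁿ →^A ⋯), Δ_A⁺ is the image of the colimit of ℕⁿ, and δ_A is the automorphism of Δ_A induced by multiplication by A. -/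
open Matrix


/-- `(Δ, ι)` together with `δ` and the positive cone `P` is Krieger's dimension triple of
the nonnegative integer matrix `A`: `Δ = colim(ℤⁿ →^A ℤⁿ → ⋯)` with structural maps
`ι k`, `P` the image of the colimit of `ℕⁿ`, and `δ` the automorphism induced by `A`. -/
def IsDimensionTriple {n : ℕ} (A : Matrix (Fin n) (Fin n) ℤ) {Δ : Type*}
    [AddCommGroup Δ] (ι : ℕ → ((Fin n → ℤ) →+ Δ)) (P : Set Δ) (δ : Δ ≃+ Δ) : Prop :=
  (∀ (k : ℕ) (v : Fin n → ℤ), ι k v = ι (k + 1) (A.mulVec v)) ∧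
  (∀ x : Δ, ∃ (k : ℕ) (v : Fin n → ℤ), x = ι k v) ∧
  (∀ (k : ℕ) (v w : Fin n → ℤ),
    ι k v = ι k w ↔ ∃ N : ℕ, (A ^ N).mulVec v = (A ^ N).mulVec w) ∧
  (P = {x : Δ | ∃ (k : ℕ) (v : Fin n → ℤ), (∀ i, 0 ≤ v i) ∧ x = ι k v}) ∧
  (∀ (k : ℕ) (v : Fin n → ℤ), δ (ι k v) = ι k (A.mulVec v))

namespace Stmt5Aux

lemma mulVec_nonneg' {p q : ℕ} {M : Matrix (Fin p) (Fin q) ℤ} (hM : ∀ i j, 0 ≤ M i j)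
    {v : Fin q → ℤ} (hv : ∀ j, 0 ≤ v j) : ∀ i, 0 ≤ M.mulVec v i := by
  intro i
  unfold Matrix.mulVec dotProduct
  exact Finset.sum_nonneg fun j _ => mul_nonneg (hM i j) (hv j)

lemma mul_nonneg' {p q r : ℕ} {M : Matrix (Fin p) (Fin q) ℤ} {N : Matrix (Fin q) (Fin r) ℤ}
    (hM : ∀ i j, 0 ≤ M i j) (hN : ∀ i j, 0 ≤ N i j) : ∀ i j, 0 ≤ (M * N) i j := by
  intro i j
  rw [Matrix.mul_apply]
  exact Finset.sum_nonneg fun k _ => mul_nonneg (hM i k) (hN k j)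

lemma pow_nonneg' {p : ℕ} {M : Matrix (Fin p) (Fin p) ℤ} (hM : ∀ i j, 0 ≤ M i j) :
    ∀ (N : ℕ) i j, 0 ≤ (M ^ N) i j := by
  intro N
  induction N with
  | zero => intro i j; simp [Matrix.one_apply]; split <;> simp
  | succ N ih => rw [pow_succ]; exact mul_nonneg' ih hM

lemma shift {p : ℕ} {A : Matrix (Fin p) (Fin p) ℤ} {Δ : Type*} [AddCommGroup Δ]
    {ι : ℕ → ((Fin p → ℤ) →+ Δ)} (hc : ∀ k v, ι k v = ι (k + 1) (A.mulVec v))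
    (j k : ℕ) (v : Fin p → ℤ) : ι k v = ι (k + j) ((A ^ j).mulVec v) := by
  induction j with
  | zero => simp
  | succ j ih =>
      rw [ih, hc, Matrix.mulVec_mulVec, ← pow_succ']
      rfl

lemma powCommL {n m : ℕ} {A : Matrix (Fin n) (Fin n) ℤ} {B : Matrix (Fin m) (Fin m) ℤ}
    {S : Matrix (Fin m) (Fin n) ℤ} (hS : S * A = B * S) (j : ℕ) : S * A ^ j = B ^ j * S := by
  induction j with
  | zero => simp
  | succ j ih =>
      rw [pow_succ, ← Matrix.mul_assoc, ih, Matrix.mul_assoc, hS, ← Matrix.mul_assoc, ← pow_succ]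

lemma hom_agree {p : ℕ} {H : Type*} [AddCommGroup H] (f g : (Fin p → ℤ) →+ H)
    (h : ∀ i, f (Pi.single i 1) = g (Pi.single i 1)) (v : Fin p → ℤ) : f v = g v := by
  have hv : v = ∑ i, (v i) • (Pi.single i (1 : ℤ)) := by
    ext j
    simp [Pi.single_apply, Finset.sum_apply]
  rw [hv, map_sum, map_sum]
  exact Finset.sum_congr rfl fun i _ => by rw [map_zsmul, map_zsmul, h i]

lemma mapWD_le {n m : ℕ} {A : Matrix (Fin n) (Fin n) ℤ} {B : Matrix (Fin m) (Fin m) ℤ}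
    {ΔA ΔB : Type*} [AddCommGroup ΔA] [AddCommGroup ΔB]
    {ιA : ℕ → ((Fin n → ℤ) →+ ΔA)} {ιB : ℕ → ((Fin m → ℤ) →+ ΔB)}
    (hcA : ∀ k v, ιA k v = ιA (k + 1) (A.mulVec v))
    (hinjA : ∀ (k : ℕ) (v w : Fin n → ℤ),
      ιA k v = ιA k w ↔ ∃ N : ℕ, (A ^ N).mulVec v = (A ^ N).mulVec w)
    (hcB : ∀ k v, ιB k v = ιB (k + 1) (B.mulVec v))
    (hinjB : ∀ (k : ℕ) (v w : Fin m → ℤ),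
      ιB k v = ιB k w ↔ ∃ N : ℕ, (B ^ N).mulVec v = (B ^ N).mulVec w)
    {S : Matrix (Fin m) (Fin n) ℤ} (hS : S * A = B * S) (c : ℕ) {k d : ℕ} {v v' : Fin n → ℤ}
    (h : ιA k v = ιA (k + d) v') :
    ιB (k + c) (S.mulVec v) = ιB (k + d + c) (S.mulVec v') := by
  rw [shift hcA d k v] at h
  obtain ⟨N, hN⟩ := (hinjA _ _ _).1 h
  rw [shift hcB d (k + c) (S.mulVec v)]
  have harith : k + c + d = k + d + c := by omega
  rw [harith]
  refine ((hinjB _ _ _).2 ⟨N, ?_⟩)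
  have := congrArg S.mulVec hN
  calc (B ^ N).mulVec ((B ^ d).mulVec (S.mulVec v))
      = (B ^ N * B ^ d * S).mulVec v := by rw [Matrix.mulVec_mulVec, Matrix.mulVec_mulVec]
    _ = (B ^ (N + d) * S).mulVec v := by rw [pow_add]
    _ = (S * A ^ (N + d)).mulVec v := by rw [powCommL hS]
    _ = S.mulVec ((A ^ N).mulVec ((A ^ d).mulVec v)) := by
        rw [Matrix.mulVec_mulVec, Matrix.mulVec_mulVec, Matrix.mul_assoc, pow_add]
    _ = S.mulVec ((A ^ N).mulVec v') := by rw [hN]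
    _ = (B ^ N * S).mulVec v' := by rw [Matrix.mulVec_mulVec, ← powCommL hS]
    _ = (B ^ N).mulVec (S.mulVec v') := by rw [Matrix.mulVec_mulVec]

lemma mapWD {n m : ℕ} {A : Matrix (Fin n) (Fin n) ℤ} {B : Matrix (Fin m) (Fin m) ℤ}
    {ΔA ΔB : Type*} [AddCommGroup ΔA] [AddCommGroup ΔB]
    {ιA : ℕ → ((Fin n → ℤ) →+ ΔA)} {ιB : ℕ → ((Fin m → ℤ) →+ ΔB)}
    (hcA : ∀ k v, ιA k v = ιA (k + 1) (A.mulVec v))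
    (hinjA : ∀ (k : ℕ) (v w : Fin n → ℤ),
      ιA k v = ιA k w ↔ ∃ N : ℕ, (A ^ N).mulVec v = (A ^ N).mulVec w)
    (hcB : ∀ k v, ιB k v = ιB (k + 1) (B.mulVec v))
    (hinjB : ∀ (k : ℕ) (v w : Fin m → ℤ),
      ιB k v = ιB k w ↔ ∃ N : ℕ, (B ^ N).mulVec v = (B ^ N).mulVec w)
    {S : Matrix (Fin m) (Fin n) ℤ} (hS : S * A = B * S) (c : ℕ) {k k' : ℕ} {v v' : Fin n → ℤ}
    (h : ιA k v = ιA k' v') :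
    ιB (k + c) (S.mulVec v) = ιB (k' + c) (S.mulVec v') := by
  rcases le_total k k' with hle | hle
  · obtain ⟨d, rfl⟩ := Nat.exists_eq_add_of_le hle
    exact mapWD_le hcA hinjA hcB hinjB hS c h
  · obtain ⟨d, rfl⟩ := Nat.exists_eq_add_of_le hle
    exact (mapWD_le hcA hinjA hcB hinjB hS c h.symm).symm

lemma col_eq {p q : ℕ} (M : Matrix (Fin p) (Fin q) ℤ) (i : Fin q) :
    M.mulVec (Pi.single i 1) = fun j => M j i := by
  ext j; simp [Matrix.mulVec_single]

lemma equalize {p q : ℕ} (C : Matrix (Fin p) (Fin p) ℤ) (M M' : Matrix (Fin p) (Fin q) ℤ)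
    (h : ∀ i, ∃ N, (C ^ N).mulVec (M.mulVec (Pi.single i 1))
      = (C ^ N).mulVec (M'.mulVec (Pi.single i 1))) :
    ∃ N, C ^ N * M = C ^ N * M' := by
  choose Ni hNi using h
  refine ⟨Finset.univ.sup Ni, ?_⟩
  set N := Finset.univ.sup Ni with hNdef
  have key : ∀ i, (C ^ N * M).mulVec (Pi.single i 1) = (C ^ N * M').mulVec (Pi.single i 1) := by
    intro i
    have hle : Ni i ≤ N := Finset.le_sup (Finset.mem_univ i)
    have := congrArg ((C ^ (N - Ni i)).mulVec) (hNi i)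
    simp only [Matrix.mulVec_mulVec] at this ⊢
    rw [← Matrix.mul_assoc, ← Matrix.mul_assoc, ← pow_add, Nat.sub_add_cancel hle] at this
    exact this
  ext j i
  have := congrFun (key i) j
  rw [col_eq, col_eq] at this
  exact this

lemma extract {n m : ℕ} {A : Matrix (Fin n) (Fin n) ℤ} {B : Matrix (Fin m) (Fin m) ℤ}
    (hB : ∀ i j, 0 ≤ B i j)
    {ΔA ΔB : Type*} [AddCommGroup ΔA] [AddCommGroup ΔB]
    {ιA : ℕ → ((Fin n → ℤ) →+ ΔA)} {PA : Set ΔA} {δA : ΔA ≃+ ΔA}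
    {ιB : ℕ → ((Fin m → ℤ) →+ ΔB)} {PB : Set ΔB} {δB : ΔB ≃+ ΔB}
    (hDA : IsDimensionTriple A ιA PA δA) (hDB : IsDimensionTriple B ιB PB δB)
    (e : ΔA ≃+ ΔB) (hP : ∀ x ∈ PA, e x ∈ PB) (hδ : ∀ x, e (δA x) = δB (e x)) :
    ∃ (S : Matrix (Fin m) (Fin n) ℤ) (kS : ℕ), (∀ i j, 0 ≤ S i j) ∧ S * A = B * S ∧
      ∀ (k : ℕ) (v : Fin n → ℤ), e (ιA k v) = ιB (kS + k) (S.mulVec v) := by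
  obtain ⟨hcA, hsurjA, hinjA, hPA, hδA⟩ := hDA
  obtain ⟨hcB, hsurjB, hinjB, hPB, hδB⟩ := hDB
  -- images of basis vectors land in the positive cone of B
  have hmem : ∀ i : Fin n, ∃ (k : ℕ) (w : Fin m → ℤ),
      (∀ j, 0 ≤ w j) ∧ e (ιA 0 (Pi.single i 1)) = ιB k w := by
    intro i
    have h1 : ιA 0 (Pi.single i 1) ∈ PA := by
      rw [hPA]
      refine ⟨0, Pi.single i 1, fun j => ?_, rfl⟩
      rcases eq_or_ne j i with rfl | hji
      · simp
      · simp [Pi.single_apply, hji]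
    have h2 := hP _ h1
    rw [hPB] at h2
    exact h2
  choose kk ww hwpos heq using hmem
  set K := Finset.univ.sup kk with hK
  have hKk : ∀ i, kk i ≤ K := fun i => Finset.le_sup (Finset.mem_univ i)
  set S' : Matrix (Fin m) (Fin n) ℤ :=
    Matrix.of (fun (j : Fin m) (i : Fin n) => (B ^ (K - kk i)).mulVec (ww i) j) with hS'
  have hS'pos : ∀ j i, 0 ≤ S' j i := fun j i => mulVec_nonneg' (pow_nonneg' hB _) (hwpos i) j
  have hcol : ∀ i, S'.mulVec (Pi.single i 1) = (B ^ (K - kk i)).mulVec (ww i) := by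
    intro i; rw [col_eq]; rfl
  have heqK : ∀ i, e (ιA 0 (Pi.single i 1)) = ιB K (S'.mulVec (Pi.single i 1)) := by
    intro i
    rw [heq i, hcol i, shift hcB (K - kk i) (kk i) (ww i), Nat.add_sub_cancel' (hKk i)]
  have spec0 : ∀ v, e (ιA 0 v) = ιB K (S'.mulVec v) := by
    intro v
    exact hom_agree (e.toAddMonoidHom.comp (ιA 0))
      ((ιB K).comp (AddMonoidHom.mk' S'.mulVec (fun x y => Matrix.mulVec_add S' x y)))
      heqK v
  -- eventual intertwining
  have hint : ∀ v, ιB K ((S' * A).mulVec v) = ιB K ((B * S').mulVec v) := by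
    intro v
    have h1 : e (ιA 0 (A.mulVec v)) = ιB K ((S' * A).mulVec v) := by
      rw [spec0, ← Matrix.mulVec_mulVec]
    have h2 : e (ιA 0 (A.mulVec v)) = ιB K ((B * S').mulVec v) := by
      rw [← hδA 0 v, hδ, spec0 v, hδB, Matrix.mulVec_mulVec]
    rw [← h1, h2]
  obtain ⟨N, hN⟩ := equalize B (S' * A) (B * S')
    (fun i => (hinjB _ _ _).1 (hint (Pi.single i 1)))
  refine ⟨B ^ N * S', K + N, mul_nonneg' (pow_nonneg' hB N) hS'pos, ?_, ?_⟩
  · -- (B^N * S') * A = B * (B^N * S')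
    calc B ^ N * S' * A = B ^ N * (S' * A) := by rw [Matrix.mul_assoc]
      _ = B ^ N * (B * S') := hN
      _ = B ^ N * B * S' := by rw [Matrix.mul_assoc]
      _ = B * B ^ N * S' := by rw [← pow_succ, ← pow_succ']
      _ = B * (B ^ N * S') := by rw [Matrix.mul_assoc]
  · -- the spec at every level, by induction on k
    have spec0' : ∀ v, e (ιA 0 v) = ιB (K + N) ((B ^ N * S').mulVec v) := by
      intro v
      rw [spec0, shift hcB N K (S'.mulVec v), Matrix.mulVec_mulVec]
    intro k
    induction k with
    | zero => intro v; exact spec0' v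
    | succ k ih =>
        intro v
        have hup : δA (ιA (k + 1) v) = ιA k v := by rw [hδA, ← hcA]
        have hupB : δB (ιB (K + N + (k + 1)) ((B ^ N * S').mulVec v))
            = ιB (K + N + k) ((B ^ N * S').mulVec v) := by
          rw [hδB]; exact (hcB (K + N + k) _).symm
        apply δB.injective
        rw [hupB, ← hδ, hup, ih v]

end Stmt5Aux

open Stmt5Aux

/-- two nonnegative integer square matrices are shift equivalent if and only
if their Krieger dimension triples `(Δ, Δ⁺, δ)` are isomorphic. -/
theorem stmt_5 {n m : ℕ}
    (A : Matrix (Fin n) (Fin n) ℤ) (hA : ∀ i j, 0 ≤ A i j)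
    (B : Matrix (Fin m) (Fin m) ℤ) (hB : ∀ i j, 0 ≤ B i j)
    {ΔA ΔB : Type*} [AddCommGroup ΔA] [AddCommGroup ΔB]
    (ιA : ℕ → ((Fin n → ℤ) →+ ΔA)) (PA : Set ΔA) (δA : ΔA ≃+ ΔA)
    (ιB : ℕ → ((Fin m → ℤ) →+ ΔB)) (PB : Set ΔB) (δB : ΔB ≃+ ΔB)
    (hDA : IsDimensionTriple A ιA PA δA) (hDB : IsDimensionTriple B ιB PB δB) :
    (∃ (R : Matrix (Fin n) (Fin m) ℤ) (S : Matrix (Fin m) (Fin n) ℤ) (ℓ : ℕ),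
       (∀ i j, 0 ≤ R i j) ∧ (∀ i j, 0 ≤ S i j) ∧ 0 < ℓ ∧
       A * R = R * B ∧ S * A = B * S ∧ A ^ ℓ = R * S ∧ B ^ ℓ = S * R) ↔
    (∃ e : ΔA ≃+ ΔB, e '' PA = PB ∧ ∀ x : ΔA, e (δA x) = δB (e x)) := by
  constructor
  · -- shift equivalence gives isomorphic dimension triples
    rintro ⟨R, S, ℓ, hRpos, hSpos, hℓ, hAR, hSA, hRS, hSR⟩
    obtain ⟨hcA, hsurjA, hinjA, hPA, hδA⟩ := hDA
    obtain ⟨hcB, hsurjB, hinjB, hPB, hδB⟩ := hDB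
    have hsurjA' := hsurjA
    choose kA vA hx using hsurjA
    choose kB vB hy using hsurjB
    have hRB : R * B = A * R := hAR.symm
    set F : ΔA → ΔB := fun x => ιB (kA x + ℓ) (S.mulVec (vA x)) with hF
    set G : ΔB → ΔA := fun y => ιA (kB y + 0) (R.mulVec (vB y)) with hG
    have FSpec : ∀ (k : ℕ) (v : Fin n → ℤ), F (ιA k v) = ιB (k + ℓ) (S.mulVec v) := fun k v =>
      mapWD hcA hinjA hcB hinjB hSA ℓ ((hx (ιA k v)).symm)
    have GSpec : ∀ (k : ℕ) (w : Fin m → ℤ), G (ιB k w) = ιA k (R.mulVec w) := fun k w =>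
      mapWD hcB hinjB hcA hinjA hRB 0 ((hy (ιB k w)).symm)
    have GF : ∀ x, G (F x) = x := by
      intro x
      show G (ιB (kA x + ℓ) (S.mulVec (vA x))) = x
      rw [GSpec, Matrix.mulVec_mulVec, ← hRS]
      exact (shift hcA ℓ (kA x) (vA x)).symm.trans (hx x).symm
    have FG : ∀ y, F (G y) = y := by
      intro y
      show F (ιA (kB y + 0) (R.mulVec (vB y))) = y
      rw [FSpec, Matrix.mulVec_mulVec, ← hSR]
      exact (shift hcB ℓ (kB y) (vB y)).symm.trans (hy y).symm
    have madd : ∀ x y, F (x + y) = F x + F y := by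
      intro x y
      set K := max (kA x) (kA y) with hKdef
      have hx' : x = ιA K ((A ^ (K - kA x)).mulVec (vA x)) := by
        have := (hx x).trans (shift hcA (K - kA x) (kA x) (vA x))
        rwa [Nat.add_sub_cancel' (le_max_left _ _)] at this
      have hy' : y = ιA K ((A ^ (K - kA y)).mulVec (vA y)) := by
        have := (hx y).trans (shift hcA (K - kA y) (kA y) (vA y))
        rwa [Nat.add_sub_cancel' (le_max_right _ _)] at this
      calc F (x + y)
          = F (ιA K ((A ^ (K - kA x)).mulVec (vA x) + (A ^ (K - kA y)).mulVec (vA y))) := by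
            rw [map_add]; rw [← hx', ← hy']
        _ = ιB (K + ℓ) (S.mulVec ((A ^ (K - kA x)).mulVec (vA x)
              + (A ^ (K - kA y)).mulVec (vA y))) := FSpec _ _
        _ = ιB (K + ℓ) (S.mulVec ((A ^ (K - kA x)).mulVec (vA x)))
              + ιB (K + ℓ) (S.mulVec ((A ^ (K - kA y)).mulVec (vA y))) := by
            rw [Matrix.mulVec_add, map_add]
        _ = F x + F y := by
            rw [← FSpec, ← FSpec, ← hx', ← hy']
    refine ⟨⟨⟨F, G, GF, FG⟩, fun {x y} => madd x y⟩, ?_, ?_⟩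
    · apply subset_antisymm
      · rintro y ⟨x, hxPA, rfl⟩
        rw [hPA] at hxPA
        obtain ⟨k, v, hv, rfl⟩ := hxPA
        rw [hPB]
        exact ⟨k + ℓ, S.mulVec v, mulVec_nonneg' hSpos hv, (FSpec k v).symm ▸ rfl⟩
      · intro y hy'
        rw [hPB] at hy'
        obtain ⟨k, w, hw, rfl⟩ := hy'
        refine ⟨ιA k (R.mulVec w), ?_, ?_⟩
        · rw [hPA]; exact ⟨k, R.mulVec w, mulVec_nonneg' hRpos hw, rfl⟩
        · show F (ιA k (R.mulVec w)) = ιB k w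
          rw [FSpec, Matrix.mulVec_mulVec, ← hSR]
          exact (shift hcB ℓ k w).symm
    · intro x
      obtain ⟨k, v, rfl⟩ := hsurjA' x
      show F (δA (ιA k v)) = δB (F (ιA k v))
      rw [hδA, FSpec, FSpec, hδB, Matrix.mulVec_mulVec, Matrix.mulVec_mulVec, hSA]
  · -- isomorphic dimension triples give shift equivalence
    rintro ⟨e, hPimg, hδe⟩
    have hP1 : ∀ x ∈ PA, e x ∈ PB := fun x hx => hPimg ▸ Set.mem_image_of_mem e hx
    have hP2 : ∀ y ∈ PB, e.symm y ∈ PA := by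
      intro y hy
      rw [← hPimg] at hy
      obtain ⟨x, hx, rfl⟩ := hy
      simpa using hx
    have hδe' : ∀ y, e.symm (δB y) = δA (e.symm y) := by
      intro y
      apply e.injective
      rw [hδe, e.apply_symm_apply, e.apply_symm_apply]
    obtain ⟨S, kS, hSpos, hSA, hSspec⟩ := extract hB hDA hDB e hP1 hδe
    obtain ⟨R, kR, hRpos, hRB, hRspec⟩ := extract hA hDB hDA e.symm hP2 hδe'
    obtain ⟨hcA, hsurjA, hinjA, hPA, hδA⟩ := hDA
    obtain ⟨hcB, hsurjB, hinjB, hPB, hδB⟩ := hDB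
    set t := kR + kS with ht
    have comp1 : ∀ v, ιA t ((A ^ t).mulVec v) = ιA t ((R * S).mulVec v) := by
      intro v
      have h1 := hSspec 0 v
      have h2 := hRspec (kS + 0) (S.mulVec v)
      have h3 : ιA 0 v = ιA t ((R * S).mulVec v) := by
        have h := congrArg e.symm h1
        rw [e.symm_apply_apply, h2, Matrix.mulVec_mulVec] at h
        have harith : kR + (kS + 0) = t := by omega
        rwa [harith] at h
      have h4 := shift hcA t 0 v
      rw [Nat.zero_add] at h4
      exact h4.symm.trans h3
    have comp2 : ∀ w, ιB t ((B ^ t).mulVec w) = ιB t ((S * R).mulVec w) := by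
      intro w
      have h2 := hRspec 0 w
      have h1 := hSspec (kR + 0) (R.mulVec w)
      have h3 : ιB 0 w = ιB t ((S * R).mulVec w) := by
        have h := congrArg e h2
        rw [e.apply_symm_apply, h1, Matrix.mulVec_mulVec] at h
        have harith : kS + (kR + 0) = t := by omega
        rwa [harith] at h
      have h4 := shift hcB t 0 w
      rw [Nat.zero_add] at h4
      exact h4.symm.trans h3
    obtain ⟨N1, hN1⟩ := equalize A (A ^ t) (R * S)
      (fun i => (hinjA _ _ _).1 (comp1 (Pi.single i 1)))
    obtain ⟨N2, hN2⟩ := equalize B (B ^ t) (S * R)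
      (fun i => (hinjB _ _ _).1 (comp2 (Pi.single i 1)))
    set N := max N1 N2 with hNdef
    have h3 : A ^ N * A ^ t = A ^ N * (R * S) := by
      have hle : N1 ≤ N := le_max_left _ _
      have hpow : A ^ (N - N1) * A ^ N1 = A ^ N := by
        rw [← pow_add, Nat.sub_add_cancel hle]
      calc A ^ N * A ^ t = A ^ (N - N1) * (A ^ N1 * A ^ t) := by
            rw [← hpow, Matrix.mul_assoc]
        _ = A ^ (N - N1) * (A ^ N1 * (R * S)) := by rw [hN1]
        _ = A ^ N * (R * S) := by rw [← Matrix.mul_assoc, hpow]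
    have h4 : B ^ N * B ^ t = B ^ N * (S * R) := by
      have hle : N2 ≤ N := le_max_right _ _
      have hpow : B ^ (N - N2) * B ^ N2 = B ^ N := by
        rw [← pow_add, Nat.sub_add_cancel hle]
      calc B ^ N * B ^ t = B ^ (N - N2) * (B ^ N2 * B ^ t) := by
            rw [← hpow, Matrix.mul_assoc]
        _ = B ^ (N - N2) * (B ^ N2 * (S * R)) := by rw [hN2]
        _ = B ^ N * (S * R) := by rw [← Matrix.mul_assoc, hpow]
    refine ⟨A ^ (N + 1) * R, S, N + 1 + t,
      mul_nonneg' (pow_nonneg' hA (N + 1)) hRpos, hSpos, by omega, ?_, hSA, ?_, ?_⟩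
    · have hAR : A * R = R * B := hRB.symm
      calc A * (A ^ (N + 1) * R) = A ^ (N + 1) * A * R := by
            rw [← Matrix.mul_assoc, pow_mul_comm']
        _ = A ^ (N + 1) * (R * B) := by rw [Matrix.mul_assoc, hAR]
        _ = A ^ (N + 1) * R * B := by rw [Matrix.mul_assoc]
    · calc A ^ (N + 1 + t) = A * (A ^ N * A ^ t) := by
            rw [pow_add, pow_succ', Matrix.mul_assoc]
        _ = A * (A ^ N * (R * S)) := by rw [h3]
        _ = A ^ (N + 1) * (R * S) := by rw [← Matrix.mul_assoc, ← pow_succ']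
        _ = A ^ (N + 1) * R * S := by rw [Matrix.mul_assoc]
    · calc B ^ (N + 1 + t) = B * (B ^ N * B ^ t) := by
            rw [pow_add, pow_succ', Matrix.mul_assoc]
        _ = B * (B ^ N * (S * R)) := by rw [h4]
        _ = B ^ (N + 1) * (S * R) := by rw [← Matrix.mul_assoc, ← pow_succ']
        _ = B ^ (N + 1) * S * R := by rw [Matrix.mul_assoc]
        _ = S * A ^ (N + 1) * R := by rw [← powCommL hSA]
        _ = S * (A ^ (N + 1) * R) := by rw [Matrix.mul_assoc]
end

section
/- Let E be a directed graph with vertex set E⁰ and edge set E¹, with source and range maps s, r : E¹ → E⁰. Let H₁ ⊆ H₂ be hereditary saturated subsets of E⁰. Then the quotient set H₂ \ H₁ is a hereditary saturated subset of the quotient graph E/H₁ (the graph with vertices E⁰ \ H₁ and edges {e ∈ E¹ : r(e) ∉ H₁}). -/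
/-- for hereditary saturated subsets `H₁ ⊆ H₂` of the vertices of a directed
graph `(V, E, s, r)`, the set `H₂ \ H₁` is a hereditary and saturated subset of the
quotient graph `E/H₁` (vertices `V \ H₁`, edges `{e | r e ∉ H₁}`). -/
theorem stmt_6 {V E : Type*} (s r : E → V) (H₁ H₂ : Set V)
    (h1her : ∀ e, s e ∈ H₁ → r e ∈ H₁)
    (h1sat : ∀ v, (∃ e, s e = v) → (∀ e, s e = v → r e ∈ H₁) → v ∈ H₁)
    (h2her : ∀ e, s e ∈ H₂ → r e ∈ H₂)
    (h2sat : ∀ v, (∃ e, s e = v) → (∀ e, s e = v → r e ∈ H₂) → v ∈ H₂)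
    (h12 : H₁ ⊆ H₂) :
    (∀ e, r e ∉ H₁ → s e ∈ H₂ \ H₁ → r e ∈ H₂ \ H₁) ∧
    (∀ v, v ∉ H₁ → (∃ e, s e = v ∧ r e ∉ H₁) →
      (∀ e, s e = v → r e ∉ H₁ → r e ∈ H₂ \ H₁) → v ∈ H₂ \ H₁) := by
  constructor
  · intro e hr ⟨hs2, _⟩
    exact ⟨h2her e hs2, hr⟩
  · rintro v hv ⟨e, hse, _⟩ hall
    refine ⟨h2sat v ⟨e, hse⟩ ?_, hv⟩
    intro f hf
    by_cases h : r f ∈ H₁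
    · exact h12 h
    · exact (hall f hf h).1
end

section
/- Let E be a row-finite directed graph, and let H be a hereditary subset of E⁰. Consider the free commutative monoid F on the vertex set of the covering graph, with the rewriting relation →₁ replacing a vertex v (which is not a sink) by the sum of r(e) over e ∈ s⁻¹(v), and → its reflexive transitive closure extended additively. If a and b are elements of F supported on H and a → γ, then γ is supported on H. -/
/-! The elements supported on `H` form the submodule `supported ℕ ℕ (Prod.fst ⁻¹' H)`.
In `ℕ` a sum vanishes only if both summands do, so if `α + (v, n)` lies in it then so do
`α` and `(v, n)`; heredity puts every range `(r e, n - 1)` of an edge `e` out of `v` in it as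
well, hence each `→₁` step, and so `→`, preserves it. -/

open Finsupp

/-- One step of the rewriting relation `→₁` on the free commutative monoid on the
vertices `V' = V × ℤ` of the covering graph `E ×₁ ℤ` of a graph `(V, E, s, r)`:
replace a non-sink vertex `(v, n)` by the sum of the ranges `(r e, n − 1)` of its
outgoing edges `{(e, n) | s e = v}`. -/
def coverStep {V E : Type*} (s r : E → V) (a b : (V × ℤ) →₀ ℕ) : Prop :=
  ∃ (v : V) (n : ℤ) (α : (V × ℤ) →₀ ℕ), (∃ e, s e = v) ∧
    a = α + Finsupp.single (v, n) 1 ∧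
    b = α + ∑ᶠ e ∈ {e : E | s e = v}, Finsupp.single (r e, n - 1) 1

theorem Finsupp.add_mem_supported_iff {α R M : Type*} [Semiring R] [AddCommMonoid M]
    [Subsingleton (AddUnits M)] [Module R M] {S : Set α} {f g : α →₀ M} :
    f + g ∈ supported M R S ↔ f ∈ supported M R S ∧ g ∈ supported M R S := by
  simp only [mem_supported', Finsupp.add_apply, add_eq_zero, ← forall_and]

section CoverStep

variable {V E : Type*} {s r : E → V} {H : Set V}

theorem coverStep_mem_supported (hH : ∀ e, s e ∈ H → r e ∈ H) {a b : (V × ℤ) →₀ ℕ}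
    (ha : a ∈ supported ℕ ℕ (Prod.fst ⁻¹' H)) (hab : coverStep s r a b) :
    b ∈ supported ℕ ℕ (Prod.fst ⁻¹' H) := by
  obtain ⟨v, n, α, -, rfl, rfl⟩ := hab
  obtain ⟨hα, hvn⟩ := add_mem_supported_iff.1 ha
  have hv : v ∈ H := hvn (show (v, n) ∈ (single (v, n) 1).support by simp)
  refine add_mem hα (finsum_mem_induction _ (zero_mem _) (fun _ _ ↦ add_mem) ?_)
  rintro e rfl
  exact single_mem_supported ℕ 1 (hH e hv)

theorem Relation.ReflTransGen.coverStep_mem_supported (hH : ∀ e, s e ∈ H → r e ∈ H)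
    {a γ : (V × ℤ) →₀ ℕ} (ha : a ∈ supported ℕ ℕ (Prod.fst ⁻¹' H))
    (h : Relation.ReflTransGen (coverStep s r) a γ) : γ ∈ supported ℕ ℕ (Prod.fst ⁻¹' H) := by
  induction h with
  | refl => exact ha
  | tail _ hstep ih => exact _root_.coverStep_mem_supported hH ih hstep

end CoverStep

theorem stmt_7_general {V E : Type*} (s r : E → V)
    (H : Set V) (hH : ∀ e, s e ∈ H → r e ∈ H)
    (a γ : (V × ℤ) →₀ ℕ)
    (ha : ∀ p ∈ a.support, p.1 ∈ H)
    (hstep : Relation.ReflTransGen (coverStep s r) a γ) :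
    ∀ p ∈ γ.support, p.1 ∈ H :=
  hstep.coverStep_mem_supported hH ha

/-- for a row-finite graph `E` and a hereditary subset `H` of its vertices,
if `a` and `b` are elements of the free commutative monoid on the vertices of the
covering graph that are supported on `H` (i.e. on `H × ℤ`) and `a → γ` (reflexive
transitive closure of `→₁`), then `γ` is supported on `H`. -/
theorem stmt_7 {V E : Type*} (s r : E → V)
    (hrow : ∀ v, {e : E | s e = v}.Finite)
    (H : Set V) (hH : ∀ e, s e ∈ H → r e ∈ H)
    (a b γ : (V × ℤ) →₀ ℕ)
    (ha : ∀ p ∈ a.support, p.1 ∈ H) (hb : ∀ p ∈ b.support, p.1 ∈ H)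
    (hstep : Relation.ReflTransGen (coverStep s r) a γ) :
    ∀ p ∈ γ.support, p.1 ∈ H :=
  stmt_7_general s r H hH a γ ha hstep
end

section
/- Let E be a row-finite graph, F the free commutative monoid on E⁰, →₁ the one-step rewriting relation replacing a non-sink vertex by the sum of ranges of its outgoing edges, → its reflexive transitive closure, and ∼ the congruence generated by →. Then for nonzero α, β ∈ F, α ∼ β if and only if there exists nonzero γ ∈ F with α → γ and β → γ (confluence of the graph monoid relation). -/
open Finsupp

/-- One step of the rewriting relation `→₁` on the free commutative monoid `F` on the
vertices of a graph `(V, E, s, r)`: replace a non-sink vertex `v` by the sum of the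
ranges of its outgoing edges. -/
def graphStep {V E : Type*} (s r : E → V) (a b : V →₀ ℕ) : Prop :=
  ∃ (v : V) (α : V →₀ ℕ), (∃ e, s e = v) ∧
    a = α + Finsupp.single v 1 ∧
    b = α + ∑ᶠ e ∈ {e : E | s e = v}, Finsupp.single (r e) 1

open Relation

/-!
The relation `α ⇝ β :↔ ∃ γ, α → γ ∧ β → γ` is already a congruence: it is an equivalence
because `→₁` is locally confluent (two rewrites at distinct vertices commute, so Church–Rosser
applies), and it is additive because `→₁` is stable under adding a summand. Since it contains
`→`, it contains `∼`. For a row-finite graph a rewrite never reaches `0`, so `γ ≠ 0`.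
-/

namespace GraphMonoid

variable {V E : Type*} (s r : E → V)

noncomputable def rangeSum (v : V) : V →₀ ℕ :=
  ∑ᶠ e ∈ {e : E | s e = v}, single (r e) 1

variable {s r}

theorem rangeSum_ne_zero {v : V} (hfin : {e : E | s e = v}.Finite) (hv : ∃ e, s e = v) :
    rangeSum s r v ≠ 0 := by
  obtain ⟨e, rfl⟩ := hv
  rw [rangeSum, finsum_mem_eq_finite_toFinset_sum _ hfin, Ne, Finset.sum_eq_zero_iff]
  exact fun h => single_ne_zero.mpr one_ne_zero (h e (by simp))

theorem graphStep_add_right {a b : V →₀ ℕ} (h : graphStep s r a b) (c : V →₀ ℕ) :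
    graphStep s r (a + c) (b + c) := by
  obtain ⟨v, δ, hv, rfl, rfl⟩ := h
  exact ⟨v, δ + c, hv, add_right_comm _ _ _, add_right_comm _ _ _⟩

theorem ne_zero_of_graphStep (hrow : ∀ v, {e : E | s e = v}.Finite) {a b : V →₀ ℕ}
    (h : graphStep s r a b) : b ≠ 0 := by
  obtain ⟨v, δ, hv, -, rfl⟩ := h
  exact fun h0 => rangeSum_ne_zero (hrow v) hv (add_eq_zero.mp h0).2

theorem reflTransGen_graphStep_add {a b c d : V →₀ ℕ} (hab : ReflTransGen (graphStep s r) a b)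
    (hcd : ReflTransGen (graphStep s r) c d) : ReflTransGen (graphStep s r) (a + c) (b + d) := by
  have right : ∀ {x y} (z : V →₀ ℕ), ReflTransGen (graphStep s r) x y →
      ReflTransGen (graphStep s r) (x + z) (y + z) :=
    fun z h => h.lift (· + z) fun _ _ hxy => graphStep_add_right hxy z
  exact (right c hab).trans (by simpa only [add_comm b] using right b hcd)

theorem reflTransGen_graphStep_ne_zero (hrow : ∀ v, {e : E | s e = v}.Finite) {a b : V →₀ ℕ}
    (ha : a ≠ 0) (h : ReflTransGen (graphStep s r) a b) : b ≠ 0 := by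
  induction h with
  | refl => exact ha
  | tail _ hstep _ => exact ne_zero_of_graphStep hrow hstep

theorem exists_eq_add_single_of_add_single_eq {v w : V} (hvw : v ≠ w) {α β : V →₀ ℕ}
    (h : α + single v 1 = β + single w 1) :
    ∃ δ, α = δ + single w 1 ∧ β = δ + single v 1 := by
  have hw : single w 1 ≤ α := by
    have hαw := DFunLike.congr_fun h w
    simp only [coe_add, Pi.add_apply, single_eq_same, single_eq_of_ne' hvw] at hαw
    exact single_le_iff.mpr (by omega)
  refine ⟨α - single w 1, (tsub_add_cancel_of_le hw).symm, add_right_cancel (b := single w 1) ?_⟩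
  rw [← h, add_right_comm, tsub_add_cancel_of_le hw]

theorem graphStep_locallyConfluent {a b c : V →₀ ℕ} (hab : graphStep s r a b)
    (hac : graphStep s r a c) :
    ∃ d, ReflGen (graphStep s r) b d ∧ ReflTransGen (graphStep s r) c d := by
  obtain ⟨v, α, hv, rfl, rfl⟩ := hab
  obtain ⟨w, β, hw, hα, rfl⟩ := hac
  by_cases hvw : v = w
  · subst hvw
    obtain rfl := add_right_cancel hα
    exact ⟨_, .refl, .refl⟩
  obtain ⟨δ, rfl, rfl⟩ := exists_eq_add_single_of_add_single_eq hvw hα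
  refine ⟨δ + rangeSum s r v + rangeSum s r w, .single ?_, .single ?_⟩
  · exact ⟨w, δ + rangeSum s r v, hw, add_right_comm _ _ _, rfl⟩
  · exact ⟨v, δ + rangeSum s r w, hv, add_right_comm _ _ _, add_right_comm _ _ _⟩

variable (s r) in
def joinCon : AddCon (V →₀ ℕ) where
  r := Join (ReflTransGen (graphStep s r))
  iseqv := equivalence_join_reflTransGen fun _ _ _ => graphStep_locallyConfluent
  add' := fun ⟨c, hac, hbc⟩ ⟨d, hcd, hdd⟩ =>
    ⟨c + d, reflTransGen_graphStep_add hac hcd, reflTransGen_graphStep_add hbc hdd⟩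

theorem addConGen_reflTransGen_graphStep_iff {a b : V →₀ ℕ} :
    addConGen (ReflTransGen (graphStep s r)) a b ↔ Join (ReflTransGen (graphStep s r)) a b := by
  refine ⟨fun h => ?_, fun ⟨c, hac, hbc⟩ => ?_⟩
  · exact AddCon.addConGen_le (c := joinCon s r).mpr (fun _ y hxy => ⟨y, hxy, .refl⟩) h
  · exact (AddConGen.Rel.of _ _ hac).trans (AddConGen.Rel.of _ _ hbc).symm

end GraphMonoid

theorem stmt_8_general {V E : Type*} (s r : E → V)
    (hrow : ∀ v, {e : E | s e = v}.Finite)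
    (α β : V →₀ ℕ) (hα : α ≠ 0) :
    addConGen (Relation.ReflTransGen (graphStep s r)) α β ↔
      ∃ γ : V →₀ ℕ, γ ≠ 0 ∧ Relation.ReflTransGen (graphStep s r) α γ ∧
        Relation.ReflTransGen (graphStep s r) β γ := by
  rw [GraphMonoid.addConGen_reflTransGen_graphStep_iff]
  exact ⟨fun ⟨γ, hαγ, hβγ⟩ => ⟨γ, GraphMonoid.reflTransGen_graphStep_ne_zero hrow hα hαγ, hαγ, hβγ⟩,
    fun ⟨γ, _, hαγ, hβγ⟩ => ⟨γ, hαγ, hβγ⟩⟩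

/-- confluence: for a row-finite graph `E`, nonzero `α, β` in the free
commutative monoid on `E⁰` are identified by the congruence `∼` generated by `→`
(the reflexive transitive closure of `→₁`) if and only if there is a nonzero `γ` with
`α → γ` and `β → γ`. -/
theorem stmt_8 {V E : Type*} (s r : E → V)
    (hrow : ∀ v, {e : E | s e = v}.Finite)
    (α β : V →₀ ℕ) (hα : α ≠ 0) (hβ : β ≠ 0) :
    addConGen (Relation.ReflTransGen (graphStep s r)) α β ↔
      ∃ γ : V →₀ ℕ, γ ≠ 0 ∧ Relation.ReflTransGen (graphStep s r) α γ ∧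
        Relation.ReflTransGen (graphStep s r) β γ :=
  stmt_8_general s r hrow α β hα
end

section
/- Let E be a row-finite graph, and let H₁ ⊆ H₂ be hereditary saturated subsets of E⁰. Let M^gr_{H} denote the commutative monoid generated by symbols v(i) for v ∈ H, i ∈ ℤ, subject to v(i) = Σ_{e ∈ s⁻¹(v)} r(e)(i−1) for every non-sink v ∈ H. Then the map sending v(i) ↦ v(i) if v ∈ H₂ \ H₁ and v(i) ↦ 0 if v ∈ H₁ induces a well-defined monoid isomorphism M^gr_{H₂} / M^gr_{H₁} ≅ M^gr_{H₂/H₁}, where H₂/H₁ is the quotient graph with vertices H₂ \ H₁ and edges {e ∈ E¹ : s(e) ∈ H₂, r(e) ∉ H₁}, and the quotient monoid M^gr_{H₂}/M^gr_{H₁} is formed using the congruence a ∼ b iff a + i = b + j for some i, j ∈ M^gr_{H₁}. -/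
/-!
The assignment `v(i) ↦ v(i)` on `H₂ \ H₁`, `v(i) ↦ 0` on `H₁` respects the relations of
`M^gr_{H₂}`: at `v ∈ H₁` both sides vanish because `H₁` is hereditary, and at `v ∉ H₁`
saturation of `H₁` yields an edge leaving `H₁`, so `v` is not a sink of `H₂/H₁`, while the
edges into `H₁` contribute `0`. It kills `M^gr_{H₁}`, so it descends to `M^gr_{H₂}/M^gr_{H₁}`.
Conversely `v(i) ↦ [v(i)]` respects the relations of `M^gr_{H₂/H₁}`, because the edges
missing from `H₂/H₁` end in `H₁`, whose generators vanish modulo `M^gr_{H₁}`. The two maps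
are inverse to each other on generators.
-/

namespace Stmt9

open Finsupp

variable {V E : Type*}

/-- Defining relations of the graded graph monoid `M^gr_{E_H}` of the restriction graph
`E_H` of a hereditary subset `H`: for every non-sink `v ∈ H` and `i ∈ ℤ`,
`v(i) = Σ_{e ∈ s⁻¹(v)} r(e)(i−1)`. -/
def gradedRel (s r : E → V) (H : Set V) (hH : ∀ e, s e ∈ H → r e ∈ H)
    (x y : (↥H × ℤ) →₀ ℕ) : Prop :=
  ∃ (v : ↥H) (i : ℤ), (∃ e, s e = ↑v) ∧
    x = Finsupp.single (v, i) 1 ∧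
    y = ∑ᶠ e : {e : E // s e = ↑v},
      Finsupp.single ((⟨r e.1, hH e.1 (by rw [e.2]; exact v.2)⟩ : ↥H), i - 1) 1

/-- The graded graph monoid `M^gr_{E_H}`, presented by generators `v(i)` (`v ∈ H`,
`i ∈ ℤ`) and the relations above. -/
def Mgr (s r : E → V) (H : Set V) (hH : ∀ e, s e ∈ H → r e ∈ H) :=
  (addConGen (gradedRel s r H hH)).Quotient

noncomputable instance (s r : E → V) (H : Set V) (hH : ∀ e, s e ∈ H → r e ∈ H) :
    AddCommMonoid (Mgr s r H hH) :=
  AddCon.addCommMonoid _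

/-- Defining relations of the graded graph monoid `M^gr_{H₂/H₁}` of the quotient graph
`H₂/H₁` (vertices `H₂ \ H₁`, edges `{e | s e ∈ H₂, r e ∉ H₁}`). -/
def gradedRelQ (s r : E → V) (H₁ H₂ : Set V) (h2 : ∀ e, s e ∈ H₂ → r e ∈ H₂)
    (x y : (↥(H₂ \ H₁) × ℤ) →₀ ℕ) : Prop :=
  ∃ (v : ↥(H₂ \ H₁)) (i : ℤ), (∃ e, s e = ↑v ∧ r e ∉ H₁) ∧
    x = Finsupp.single (v, i) 1 ∧
    y = ∑ᶠ e : {e : E // s e = ↑v ∧ r e ∉ H₁},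
      Finsupp.single ((⟨r e.1, ⟨h2 e.1 (by rw [e.2.1]; exact v.2.1), e.2.2⟩⟩ :
        ↥(H₂ \ H₁)), i - 1) 1

/-- The graded graph monoid of the quotient graph `H₂/H₁`. -/
def MgrQ (s r : E → V) (H₁ H₂ : Set V) (h2 : ∀ e, s e ∈ H₂ → r e ∈ H₂) :=
  (addConGen (gradedRelQ s r H₁ H₂ h2)).Quotient

noncomputable instance (s r : E → V) (H₁ H₂ : Set V) (h2 : ∀ e, s e ∈ H₂ → r e ∈ H₂) :
    AddCommMonoid (MgrQ s r H₁ H₂ h2) :=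
  AddCon.addCommMonoid _

/-- The submonoid `M^gr_{H₁}` of `M^gr_{H₂}`, generated by the generators `v(i)` with
`v ∈ H₁`. -/
noncomputable def subMgr (s r : E → V) (H₁ H₂ : Set V) (h2 : ∀ e, s e ∈ H₂ → r e ∈ H₂) :
    AddSubmonoid (Mgr s r H₂ h2) :=
  AddSubmonoid.closure {x | ∃ (v : ↥H₂) (i : ℤ), ↑v ∈ H₁ ∧
    x = (addConGen (gradedRel s r H₂ h2)).mk' (Finsupp.single (v, i) 1)}

/-- The congruence `a ∼_I b ↔ ∃ i, j ∈ I, a + i = b + j` modulo a submonoid `I`,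
defining the quotient monoid `M/I`. -/
def modCon {M : Type*} [AddCommMonoid M] (I : AddSubmonoid M) : AddCon M where
  r a b := ∃ i ∈ I, ∃ j ∈ I, a + i = b + j
  iseqv := by
    constructor
    · exact fun a => ⟨0, I.zero_mem, 0, I.zero_mem, rfl⟩
    · rintro a b ⟨i, hi, j, hj, h⟩
      exact ⟨j, hj, i, hi, h.symm⟩
    · rintro a b c ⟨i, hi, j, hj, h1⟩ ⟨i', hi', j', hj', h2⟩
      refine ⟨i + i', I.add_mem hi hi', j' + j, I.add_mem hj' hj, ?_⟩
      rw [← add_assoc, h1, add_right_comm, h2, add_assoc]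
  add' := by
    rintro a b c d ⟨i, hi, j, hj, h1⟩ ⟨i', hi', j', hj', h2⟩
    refine ⟨i + i', I.add_mem hi hi', j + j', I.add_mem hj hj', ?_⟩
    rw [add_add_add_comm, h1, h2, add_add_add_comm]

section Presentation

variable {α M : Type*} [AddCommMonoid M]

noncomputable def freeLift (f : α → M) : (α →₀ ℕ) →+ M :=
  liftAddHom fun a => multiplesHom M (f a)

theorem freeLift_single (f : α → M) (a : α) : freeLift f (single a 1) = f a := by
  rw [freeLift, liftAddHom_apply_single, multiplesHom_apply, one_nsmul]

theorem addConGen_mk'_eq_of_rel {R : (α →₀ ℕ) → (α →₀ ℕ) → Prop} {x y : α →₀ ℕ}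
    (h : R x y) : (addConGen R).mk' x = (addConGen R).mk' y :=
  (AddCon.eq _).mpr (AddConGen.Rel.of _ _ h)

noncomputable def presentedLift {R : (α →₀ ℕ) → (α →₀ ℕ) → Prop} (f : α → M)
    (hf : ∀ x y, R x y → freeLift f x = freeLift f y) : (addConGen R).Quotient →+ M :=
  AddCon.lift _ (freeLift f) (AddCon.addConGen_le.2 hf)

theorem presentedLift_mk'_single {R : (α →₀ ℕ) → (α →₀ ℕ) → Prop} (f : α → M)
    (hf : ∀ x y, R x y → freeLift f x = freeLift f y) (a : α) :
    presentedLift f hf ((addConGen R).mk' (single a 1)) = f a :=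
  (AddCon.lift_mk' _ _).trans (freeLift_single f a)

theorem hom_ext_of_surjective_free {Q : Type*} [AddCommMonoid Q] {π : (α →₀ ℕ) →+ Q}
    (hπ : Function.Surjective π) {f g : Q →+ M}
    (h : ∀ a, f (π (single a 1)) = g (π (single a 1))) : f = g :=
  (AddMonoidHom.cancel_right hπ).1 (addHom_ext' fun a => AddMonoidHom.ext_nat (h a))

end Presentation

section QuotientBySubmonoid

variable {M N : Type*} [AddCommMonoid M] [AddCommMonoid N] {I : AddSubmonoid M}

theorem modCon_mk'_eq_zero {x : M} (hx : x ∈ I) : (modCon I).mk' x = 0 :=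
  (AddCon.eq _).mpr ⟨0, I.zero_mem, x, hx, by rw [add_zero, zero_add]⟩

noncomputable def modConLift (f : M →+ N) (hf : I ≤ AddMonoidHom.mker f) :
    (modCon I).Quotient →+ N :=
  AddCon.lift _ f fun a b ⟨i, hi, j, hj, h⟩ => (AddCon.ker_rel f).2 <| by
    simpa only [map_add, AddMonoidHom.mem_mker.1 (hf hi), AddMonoidHom.mem_mker.1 (hf hj),
      add_zero] using congrArg f h

theorem modConLift_mk' (f : M →+ N) (hf : I ≤ AddMonoidHom.mker f) (x : M) :
    modConLift f hf ((modCon I).mk' x) = f x :=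
  AddCon.lift_mk' _ _

end QuotientBySubmonoid

theorem finsum_subtype_eq_finsum_subtype_and {α M : Type*} [AddCommMonoid M] {p q : α → Prop}
    {f : α → M} (hf : ∀ a, p a → ¬ q a → f a = 0) :
    ∑ᶠ a : {a // p a}, f a = ∑ᶠ a : {a // p a ∧ q a}, f a :=
  (finsum_set_coe_eq_finsum_mem {a | p a}).trans <|
    (finsum_mem_inter_support_eq' f {a | p a} {a | p a ∧ q a} fun a ha =>
      ⟨fun hp => ⟨hp, by_contra fun hq => ha (hf a hp hq)⟩, And.left⟩).trans
    (finsum_set_coe_eq_finsum_mem {a | p a ∧ q a}).symm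

section VertexGenerators

variable {H : Set V} {M : Type*} [AddCommMonoid M]

-- Extending by zero off `H` turns the image of a relation sum into a function of the range
-- vertex `r e` alone, free of the membership proofs inside its summands.
open scoped Classical in
noncomputable def genOrZero (π : ((↥H × ℤ) →₀ ℕ) →+ M) (v : V) (i : ℤ) : M :=
  if h : v ∈ H then π (single (⟨v, h⟩, i) 1) else 0

theorem genOrZero_of_mem (π : ((↥H × ℤ) →₀ ℕ) →+ M) {v : V} (h : v ∈ H) (i : ℤ) :
    genOrZero π v i = π (single (⟨v, h⟩, i) 1) :=
  dif_pos h

theorem genOrZero_of_not_mem (π : ((↥H × ℤ) →₀ ℕ) →+ M) {v : V} (h : v ∉ H) (i : ℤ) :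
    genOrZero π v i = 0 :=
  dif_neg h

theorem map_finsum_single {p : E → Prop} [Finite {e // p e}] (r : E → V)
    (π : ((↥H × ℤ) →₀ ℕ) →+ M) (φ : V → ℤ → M)
    (hφ : ∀ v (hv : v ∈ H) i, π (single (⟨v, hv⟩, i) 1) = φ v i)
    (hr : ∀ e, p e → r e ∈ H) (i : ℤ) :
    π (∑ᶠ e : {e // p e}, single (⟨r e, hr e e.2⟩, i) 1) = ∑ᶠ e : {e // p e}, φ (r e) i := by
  rw [map_finsum π (Set.toFinite _)]
  exact finsum_congr fun e => hφ _ _ _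

end VertexGenerators

section QuotientIso

variable {s r : E → V} {H₁ H₂ : Set V} (h2 : ∀ e, s e ∈ H₂ → r e ∈ H₂)

noncomputable def modMk (H₁ : Set V) :
    ((↥H₂ × ℤ) →₀ ℕ) →+ (modCon (subMgr s r H₁ H₂ h2)).Quotient :=
  (modCon _).mk'.comp (addConGen (gradedRel s r H₂ h2)).mk'

noncomputable def mgrQMk (H₁ : Set V) : ((↥(H₂ \ H₁) × ℤ) →₀ ℕ) →+ MgrQ s r H₁ H₂ h2 :=
  (addConGen (gradedRelQ s r H₁ H₂ h2)).mk'

theorem modMk_surjective : Function.Surjective (modMk h2 H₁) :=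
  AddCon.mk'_surjective.comp AddCon.mk'_surjective

theorem mgrQMk_surjective : Function.Surjective (mgrQMk h2 H₁) :=
  AddCon.mk'_surjective

theorem modMk_eq_of_gradedRel {x y : (↥H₂ × ℤ) →₀ ℕ} (h : gradedRel s r H₂ h2 x y) :
    modMk h2 H₁ x = modMk h2 H₁ y :=
  congrArg (modCon (subMgr s r H₁ H₂ h2)).mk' (addConGen_mk'_eq_of_rel h)

theorem mgrQMk_eq_of_gradedRelQ {x y : (↥(H₂ \ H₁) × ℤ) →₀ ℕ}
    (h : gradedRelQ s r H₁ H₂ h2 x y) : mgrQMk h2 H₁ x = mgrQMk h2 H₁ y :=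
  addConGen_mk'_eq_of_rel h

theorem genOrZero_modMk_of_mem {v : V} (hv : v ∈ H₁) (i : ℤ) :
    genOrZero (modMk h2 H₁) v i = 0 := by
  by_cases hv₂ : v ∈ H₂
  · rw [genOrZero_of_mem _ hv₂]
    exact modCon_mk'_eq_zero (AddSubmonoid.subset_closure ⟨⟨v, hv₂⟩, i, hv, rfl⟩)
  · exact genOrZero_of_not_mem _ hv₂ i

theorem genOrZero_mgrQMk_of_mem {v : V} (hv : v ∈ H₁) (i : ℤ) :
    genOrZero (mgrQMk h2 H₁) v i = 0 :=
  genOrZero_of_not_mem _ (fun h => h.2 hv) i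

theorem freeLift_genOrZero_eq_of_gradedRel (hrow : ∀ v, {e : E | s e = v}.Finite)
    (h1 : ∀ e, s e ∈ H₁ → r e ∈ H₁)
    (h1sat : ∀ v, (∃ e, s e = v) → (∀ e, s e = v → r e ∈ H₁) → v ∈ H₁)
    {x y : (↥H₂ × ℤ) →₀ ℕ} (hxy : gradedRel s r H₂ h2 x y) :
    freeLift (fun p : ↥H₂ × ℤ => genOrZero (mgrQMk h2 H₁) p.1 p.2) x =
      freeLift (fun p : ↥H₂ × ℤ => genOrZero (mgrQMk h2 H₁) p.1 p.2) y := by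
  obtain ⟨v, i, hne, rfl, rfl⟩ := hxy
  have : Finite {e // s e = v} := (hrow v).to_subtype
  have hr₂ (e : E) (he : s e = v) : r e ∈ H₂ := h2 e (he ▸ v.2)
  rw [freeLift_single, map_finsum_single r _ _ (fun _ _ _ => freeLift_single _ _) hr₂]
  by_cases hv : (v : V) ∈ H₁
  · rw [genOrZero_mgrQMk_of_mem h2 hv, finsum_eq_zero_of_forall_eq_zero fun (e : {e // s e = v}) =>
      genOrZero_mgrQMk_of_mem h2 (h1 e (e.2.symm ▸ hv)) _]
  obtain ⟨e₀, hs, hr⟩ : ∃ e, s e = v ∧ r e ∉ H₁ := by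
    by_contra! h
    exact hv (h1sat v hne h)
  have : Finite {e // s e = v ∧ r e ∉ H₁} := ((hrow v).subset fun _ => And.left).to_subtype
  have hvQ : (v : V) ∈ H₂ \ H₁ := ⟨v.2, hv⟩
  have hrQ (e : E) (he : s e = v ∧ r e ∉ H₁) : r e ∈ H₂ \ H₁ := ⟨hr₂ e he.1, he.2⟩
  rw [genOrZero_of_mem _ hvQ,
    mgrQMk_eq_of_gradedRelQ h2 ⟨⟨v, hvQ⟩, i, ⟨e₀, hs, hr⟩, rfl, rfl⟩,
    map_finsum_single r _ _ (fun _ _ _ => (genOrZero_of_mem _ _ _).symm) hrQ]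
  exact (finsum_subtype_eq_finsum_subtype_and fun e _ hq =>
    genOrZero_mgrQMk_of_mem h2 (not_not.1 hq) _).symm

theorem freeLift_genOrZero_eq_of_gradedRelQ (hrow : ∀ v, {e : E | s e = v}.Finite)
    {x y : (↥(H₂ \ H₁) × ℤ) →₀ ℕ} (hxy : gradedRelQ s r H₁ H₂ h2 x y) :
    freeLift (fun p : ↥(H₂ \ H₁) × ℤ => genOrZero (modMk h2 H₁) p.1 p.2) x =
      freeLift (fun p : ↥(H₂ \ H₁) × ℤ => genOrZero (modMk h2 H₁) p.1 p.2) y := by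
  obtain ⟨w, i, ⟨e₀, hs, -⟩, rfl, rfl⟩ := hxy
  have : Finite {e // s e = w} := (hrow w).to_subtype
  have : Finite {e // s e = w ∧ r e ∉ H₁} := ((hrow w).subset fun _ => And.left).to_subtype
  have hr₂ (e : E) (he : s e = w) : r e ∈ H₂ := h2 e (he ▸ w.2.1)
  have hrQ (e : E) (he : s e = w ∧ r e ∉ H₁) : r e ∈ H₂ \ H₁ := ⟨hr₂ e he.1, he.2⟩
  rw [freeLift_single, map_finsum_single r _ _ (fun _ _ _ => freeLift_single _ _) hrQ,
    genOrZero_of_mem _ w.2.1, modMk_eq_of_gradedRel h2 ⟨⟨w, w.2.1⟩, i, ⟨e₀, hs⟩, rfl, rfl⟩,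
    map_finsum_single r _ _ (fun _ _ _ => (genOrZero_of_mem _ _ _).symm) hr₂]
  exact finsum_subtype_eq_finsum_subtype_and fun e _ hq =>
    genOrZero_modMk_of_mem h2 (not_not.1 hq) _

variable (hrow : ∀ v, {e : E | s e = v}.Finite) (h1 : ∀ e, s e ∈ H₁ → r e ∈ H₁)
  (h1sat : ∀ v, (∃ e, s e = v) → (∀ e, s e = v → r e ∈ H₁) → v ∈ H₁)

noncomputable def mgrToMgrQ : Mgr s r H₂ h2 →+ MgrQ s r H₁ H₂ h2 :=
  presentedLift _ fun _ _ => freeLift_genOrZero_eq_of_gradedRel h2 hrow h1 h1sat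

noncomputable def quotientToMgrQ :
    (modCon (subMgr s r H₁ H₂ h2)).Quotient →+ MgrQ s r H₁ H₂ h2 :=
  modConLift (mgrToMgrQ h2 hrow h1 h1sat) <| AddSubmonoid.closure_le.2 <| by
    rintro _ ⟨v, i, hv, rfl⟩
    exact (presentedLift_mk'_single _ _ _).trans (genOrZero_mgrQMk_of_mem h2 hv i)

theorem quotientToMgrQ_modMk_single (p : ↥H₂ × ℤ) :
    quotientToMgrQ h2 hrow h1 h1sat (modMk h2 H₁ (single p 1)) =
      genOrZero (mgrQMk h2 H₁) p.1 p.2 :=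
  (modConLift_mk' _ _ _).trans (presentedLift_mk'_single _ _ _)

theorem quotientToMgrQ_genOrZero (v : V) (i : ℤ) :
    quotientToMgrQ h2 hrow h1 h1sat (genOrZero (modMk h2 H₁) v i) =
      genOrZero (mgrQMk h2 H₁) v i := by
  by_cases hv : v ∈ H₂
  · rw [genOrZero_of_mem _ hv, quotientToMgrQ_modMk_single]
  · rw [genOrZero_of_not_mem _ hv, map_zero, genOrZero_of_not_mem _ fun h => hv h.1]

noncomputable def mgrQToQuotient :
    MgrQ s r H₁ H₂ h2 →+ (modCon (subMgr s r H₁ H₂ h2)).Quotient :=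
  presentedLift _ fun _ _ => freeLift_genOrZero_eq_of_gradedRelQ h2 hrow

theorem mgrQToQuotient_genOrZero (v : V) (i : ℤ) :
    mgrQToQuotient h2 hrow (genOrZero (mgrQMk h2 H₁) v i) =
      genOrZero (modMk h2 H₁) v i := by
  by_cases hv : v ∈ H₂ \ H₁
  · rw [genOrZero_of_mem _ hv]
    exact presentedLift_mk'_single _ _ _
  rw [genOrZero_of_not_mem _ hv, map_zero]
  by_cases hv₁ : v ∈ H₁
  · rw [genOrZero_modMk_of_mem h2 hv₁]
  · rw [genOrZero_of_not_mem _ fun h => hv ⟨h, hv₁⟩]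

end QuotientIso

theorem stmt_9_general (s r : E → V) (hrow : ∀ v, {e : E | s e = v}.Finite)
    (H₁ H₂ : Set V)
    (h1 : ∀ e, s e ∈ H₁ → r e ∈ H₁) (h2 : ∀ e, s e ∈ H₂ → r e ∈ H₂)
    (h1sat : ∀ v, (∃ e, s e = v) → (∀ e, s e = v → r e ∈ H₁) → v ∈ H₁) :
    ∃ e : (modCon (subMgr s r H₁ H₂ h2)).Quotient ≃+ MgrQ s r H₁ H₂ h2,
      (∀ (v : ↥H₂) (i : ℤ), ↑v ∈ H₁ →
        e ((modCon (subMgr s r H₁ H₂ h2)).mk'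
            ((addConGen (gradedRel s r H₂ h2)).mk' (Finsupp.single (v, i) 1))) = 0) ∧
      (∀ (v : ↥H₂) (hv : ↑v ∉ H₁) (i : ℤ),
        e ((modCon (subMgr s r H₁ H₂ h2)).mk'
            ((addConGen (gradedRel s r H₂ h2)).mk' (Finsupp.single (v, i) 1))) =
          (addConGen (gradedRelQ s r H₁ H₂ h2)).mk'
            (Finsupp.single ((⟨↑v, v.2, hv⟩ : ↥(H₂ \ H₁)), i) 1)) := by
  set φ := quotientToMgrQ h2 hrow h1 h1sat
  set ψ := mgrQToQuotient (H₁ := H₁) h2 hrow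
  have hφ := quotientToMgrQ_modMk_single h2 hrow h1 h1sat
  refine ⟨φ.toAddEquiv ψ ?_ ?_, fun v i hv => ?_, fun v hv i => ?_⟩
  · refine hom_ext_of_surjective_free (modMk_surjective h2) fun p => ?_
    rw [AddMonoidHom.comp_apply, hφ, mgrQToQuotient_genOrZero, genOrZero_of_mem _ p.1.2]
    rfl
  · refine hom_ext_of_surjective_free (mgrQMk_surjective h2) fun p => ?_
    rw [AddMonoidHom.comp_apply, ← genOrZero_of_mem _ p.1.2, mgrQToQuotient_genOrZero,
      quotientToMgrQ_genOrZero]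
    rfl
  · exact (hφ (v, i)).trans (genOrZero_mgrQMk_of_mem h2 hv i)
  · exact (hφ (v, i)).trans (genOrZero_of_mem _ (show (v : V) ∈ H₂ \ H₁ from ⟨v.2, hv⟩) i)

/-- for hereditary saturated subsets `H₁ ⊆ H₂` of a row-finite graph, the map
`v(i) ↦ v(i)` for `v ∈ H₂ \ H₁` and `v(i) ↦ 0` for `v ∈ H₁` induces a monoid isomorphism
`M^gr_{H₂} / M^gr_{H₁} ≅ M^gr_{H₂/H₁}`. -/
theorem stmt_9 (s r : E → V) (hrow : ∀ v, {e : E | s e = v}.Finite)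
    (H₁ H₂ : Set V) (h12 : H₁ ⊆ H₂)
    (h1 : ∀ e, s e ∈ H₁ → r e ∈ H₁) (h2 : ∀ e, s e ∈ H₂ → r e ∈ H₂)
    (h1sat : ∀ v, (∃ e, s e = v) → (∀ e, s e = v → r e ∈ H₁) → v ∈ H₁)
    (h2sat : ∀ v, (∃ e, s e = v) → (∀ e, s e = v → r e ∈ H₂) → v ∈ H₂) :
    ∃ e : (modCon (subMgr s r H₁ H₂ h2)).Quotient ≃+ MgrQ s r H₁ H₂ h2,
      (∀ (v : ↥H₂) (i : ℤ), ↑v ∈ H₁ →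
        e ((modCon (subMgr s r H₁ H₂ h2)).mk'
            ((addConGen (gradedRel s r H₂ h2)).mk' (Finsupp.single (v, i) 1))) = 0) ∧
      (∀ (v : ↥H₂) (hv : ↑v ∉ H₁) (i : ℤ),
        e ((modCon (subMgr s r H₁ H₂ h2)).mk'
            ((addConGen (gradedRel s r H₂ h2)).mk' (Finsupp.single (v, i) 1))) =
          (addConGen (gradedRelQ s r H₁ H₂ h2)).mk'
            (Finsupp.single ((⟨↑v, v.2, hv⟩ : ↥(H₂ \ H₁)), i) 1)) :=
  stmt_9_general s r hrow H₁ H₂ h1 h2 h1sat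

end Stmt9
end

section
/- Let E be a row-finite graph with vertex set E⁰ = R ⊔ S where S is the set of sinks and R the non-sinks, and adjacency data given by a transposed matrix map K : ℤ^(R) → ℤ^(R) ⊕ ℤ^(S), K(x) = ((B^t − I)x, C^t x), where B, C encode the edges from R to R and from R to S respectively. Let D be the block map on ℤ^(R) ⊕ ℤ^(S) ⊕ ℤ^(S) ⊕ ⋯ (finitely supported sequences) given by D(x, y₁, y₂, …) = (B^t x, C^t x, y₁, y₂, …). Then the natural inclusions i : ℤ^(R) → ℤ^(R) ⊕ ℤ^(S) ⊕ ⋯ and j : ℤ^(R) ⊕ ℤ^(S) → ℤ^(R) ⊕ ℤ^(S) ⊕ ⋯ (into the first coordinates) satisfy (D − 1)∘i = j∘K, and i restricts to an isomorphism Ker K ≅ Ker(D − 1), while j induces an isomorphism Coker K ≅ Coker(D − 1). -/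
/-
The inclusion `i` identifies `Ker K` with `Ker (D - 1)` and `j` identifies `Coker K` with
`Coker (D - 1)` because of two facts about the tail `ℤ^(S) ⊕ ℤ^(S) ⊕ ⋯` on which `D` acts as the
shift `σ`. First, `a δ₀ + σ y = y` forces `y` to be constant, hence zero by finite support, and
then `a = 0`: so an element of `Ker (D - 1)`, or of `(D - 1)⁻¹ (Im j)`, has no tail. Second,
`δₙ s - δ₀ s` is a telescoping sum of the elements `(σ - 1) (δₖ s)`, so modulo `Im (D - 1)` every
tail `y` collapses to `(∑ₙ yₙ) δ₀ ∈ Im j`.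
-/

namespace Stmt10

variable {R S : Type*}

/-- The infinite direct sum `ℤ^(R) ⊕ ℤ^(S) ⊕ ℤ^(S) ⊕ ⋯` (the tail of copies of `ℤ^(S)`
is modelled by finitely supported sequences `ℕ →₀ ℤ^(S)`). -/
abbrev Tot (R S : Type*) := (R →₀ ℤ) × (ℕ →₀ (S →₀ ℤ))

/-- The map `K : ℤ^(R) → ℤ^(R) ⊕ ℤ^(S)`, `K x = ((Bᵗ − I) x, Cᵗ x)`. -/
noncomputable def Kmap (bt : (R →₀ ℤ) →+ (R →₀ ℤ)) (ct : (R →₀ ℤ) →+ (S →₀ ℤ)) :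
    (R →₀ ℤ) →+ (R →₀ ℤ) × (S →₀ ℤ) :=
  (bt - AddMonoidHom.id (R →₀ ℤ)).prod ct

/-- The block map `D (x, y₁, y₂, …) = (Bᵗ x, Cᵗ x, y₁, y₂, …)`. -/
noncomputable def Dmap (bt : (R →₀ ℤ) →+ (R →₀ ℤ)) (ct : (R →₀ ℤ) →+ (S →₀ ℤ)) :
    Tot R S →+ Tot R S :=
  (bt.comp (AddMonoidHom.fst _ _)).prod
    (((Finsupp.singleAddHom (0 : ℕ)).comp (ct.comp (AddMonoidHom.fst _ _))) +
      ((Finsupp.mapDomain.addMonoidHom (· + 1)).comp (AddMonoidHom.snd _ _)))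

/-- Inclusion `i : ℤ^(R) → ℤ^(R) ⊕ ℤ^(S) ⊕ ⋯` into the first coordinate. -/
noncomputable def imap : (R →₀ ℤ) →+ Tot R S := AddMonoidHom.inl _ _

/-- Inclusion `j : ℤ^(R) ⊕ ℤ^(S) → ℤ^(R) ⊕ ℤ^(S) ⊕ ⋯` into the first two coordinates. -/
noncomputable def jmap : (R →₀ ℤ) × (S →₀ ℤ) →+ Tot R S :=
  (AddMonoidHom.fst _ _).prod ((Finsupp.singleAddHom (0 : ℕ)).comp (AddMonoidHom.snd _ _))

section Shift

variable {A : Type*} [AddCommGroup A]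

theorem _root_.Finsupp.eq_zero_of_apply_succ_eq (y : ℕ →₀ A) (h : ∀ n, y (n + 1) = y n) :
    y = 0 := by
  have h_const : ∀ n, y n = y 0 := fun n => by
    induction n with
    | zero => rfl
    | succ n ih => rw [h, ih]
  obtain ⟨n, hn⟩ := Infinite.exists_notMem_finset y.support
  ext m
  rw [h_const m, ← h_const n, Finsupp.notMem_support_iff.mp hn, Finsupp.coe_zero, Pi.zero_apply]

theorem _root_.Finsupp.single_zero_add_shift_eq_self_iff (a : A) (y : ℕ →₀ A) :
    Finsupp.single 0 a + Finsupp.mapDomain (· + 1) y = y ↔ a = 0 ∧ y = 0 := by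
  refine ⟨fun h => ?_, fun ⟨ha, hy⟩ => by simp [ha, hy]⟩
  have hy : y = 0 := y.eq_zero_of_apply_succ_eq fun n => by
    simpa [Finsupp.mapDomain_apply (add_left_injective 1)] using
      (DFunLike.congr_fun h (n + 1)).symm
  subst hy
  simpa using h

theorem _root_.Finsupp.sub_single_sum_mem_range_shift_sub_id (y : ℕ →₀ A) :
    y - Finsupp.single 0 (y.sum fun _ a => a) ∈
      (Finsupp.mapDomain.addMonoidHom (· + 1) - AddMonoidHom.id (ℕ →₀ A)).range := by
  set H := (Finsupp.mapDomain.addMonoidHom (· + 1) - AddMonoidHom.id (ℕ →₀ A)).range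
  induction y using Finsupp.induction_linear with
  | zero => simp
  | add y₁ y₂ h₁ h₂ =>
    rw [Finsupp.sum_add_index' (fun _ => rfl) (fun _ _ _ => rfl), Finsupp.single_add,
      add_sub_add_comm]
    exact H.add_mem h₁ h₂
  | single n s =>
    rw [Finsupp.sum_single_index rfl]
    induction n with
    | zero => simp
    | succ n ih =>
      have h_step : Finsupp.single (n + 1) s - Finsupp.single n s ∈ H :=
        ⟨Finsupp.single n s, by simp [Finsupp.mapDomain_single]⟩
      simpa using H.add_mem h_step ih

end Shift

section Blocks

variable (bt : (R →₀ ℤ) →+ (R →₀ ℤ)) (ct : (R →₀ ℤ) →+ (S →₀ ℤ))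

theorem Dmap_sub_id_apply (p : Tot R S) :
    (Dmap bt ct - AddMonoidHom.id (Tot R S)) p =
      (bt p.1 - p.1, Finsupp.single 0 (ct p.1) + Finsupp.mapDomain (· + 1) p.2 - p.2) :=
  rfl

theorem Dmap_sub_id_comp_imap (x : R →₀ ℤ) :
    (Dmap bt ct - AddMonoidHom.id (Tot R S)) (imap x) = jmap (Kmap bt ct x) := by
  rw [Dmap_sub_id_apply]
  simp [imap, jmap, Kmap]

theorem mem_ker_Kmap_iff (x : R →₀ ℤ) : x ∈ (Kmap bt ct).ker ↔ bt x = x ∧ ct x = 0 := by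
  simp [Kmap, sub_eq_zero]

theorem ker_Dmap_sub_id :
    (Dmap bt ct - AddMonoidHom.id (Tot R S)).ker = (Kmap bt ct).ker.map imap := by
  ext ⟨x, y⟩
  rw [AddMonoidHom.mem_ker, Dmap_sub_id_apply, Prod.mk_eq_zero, sub_eq_zero, sub_eq_zero,
    Finsupp.single_zero_add_shift_eq_self_iff]
  constructor
  · rintro ⟨hx, hc, rfl⟩
    exact ⟨x, (mem_ker_Kmap_iff bt ct x).mpr ⟨hx, hc⟩, rfl⟩
  · rintro ⟨x, hx, h⟩
    obtain ⟨rfl, rfl⟩ := Prod.mk.inj h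
    obtain ⟨hx, hc⟩ := (mem_ker_Kmap_iff bt ct x).mp hx
    exact ⟨hx, hc, rfl⟩

theorem comap_jmap_range_Dmap_sub_id :
    (Dmap bt ct - AddMonoidHom.id (Tot R S)).range.comap jmap = (Kmap bt ct).range := by
  ext ⟨u, v⟩
  constructor
  · rintro ⟨⟨x, y⟩, h⟩
    rw [Dmap_sub_id_apply] at h
    simp only [jmap, AddMonoidHom.prod_apply, AddMonoidHom.coe_fst,
      AddMonoidHom.comp_apply, AddMonoidHom.coe_snd, Finsupp.singleAddHom_apply,
      Prod.mk.injEq] at h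
    obtain ⟨rfl, h_tail⟩ := h
    have h_tail' : Finsupp.single 0 (ct x - v) + Finsupp.mapDomain (· + 1) y = y := by
      rw [Finsupp.single_sub, ← h_tail]
      abel
    obtain ⟨hv, -⟩ := (Finsupp.single_zero_add_shift_eq_self_iff _ _).mp h_tail'
    exact ⟨x, by simp [Kmap, sub_eq_zero.mp hv]⟩
  · rintro ⟨x, h⟩
    exact ⟨imap x, by rw [Dmap_sub_id_comp_imap, h]⟩

theorem sub_jmap_mem_range_Dmap_sub_id (p : Tot R S) :
    p - jmap (p.1, p.2.sum fun _ a => a) ∈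
      (Dmap bt ct - AddMonoidHom.id (Tot R S)).range := by
  obtain ⟨w, hw⟩ := p.2.sub_single_sum_mem_range_shift_sub_id
  refine ⟨(0, w), ?_⟩
  simp only [AddMonoidHom.sub_apply, AddMonoidHom.id_apply,
    Finsupp.mapDomain.addMonoidHom_apply] at hw
  rw [Dmap_sub_id_apply]
  simp [jmap, hw, Prod.ext_iff]

theorem surjective_mk_comp_jmap :
    Function.Surjective
      ((QuotientAddGroup.mk' (Dmap bt ct - AddMonoidHom.id (Tot R S)).range).comp jmap) := by
  rintro ⟨p⟩
  exact ⟨_, (QuotientAddGroup.eq_iff_sub_mem.mpr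
    (sub_jmap_mem_range_Dmap_sub_id bt ct p)).symm⟩

end Blocks

/-- `(D − 1) ∘ i = j ∘ K`; `i` restricts to an isomorphism
`Ker K ≅ Ker (D − 1)`, and `j` induces an isomorphism `Coker K ≅ Coker (D − 1)`. -/
theorem stmt_10 (bt : (R →₀ ℤ) →+ (R →₀ ℤ)) (ct : (R →₀ ℤ) →+ (S →₀ ℤ)) :
    (∀ x : R →₀ ℤ, (Dmap bt ct - AddMonoidHom.id (Tot R S)) (imap x) = jmap (Kmap bt ct x)) ∧
    (∃ e : (Kmap bt ct).ker ≃+ (Dmap bt ct - AddMonoidHom.id (Tot R S)).ker,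
      ∀ x : (Kmap bt ct).ker, (e x : Tot R S) = imap (x : R →₀ ℤ)) ∧
    (∃ e' : ((R →₀ ℤ) × (S →₀ ℤ)) ⧸ (Kmap bt ct).range ≃+
        Tot R S ⧸ (Dmap bt ct - AddMonoidHom.id (Tot R S)).range,
      ∀ z : (R →₀ ℤ) × (S →₀ ℤ),
        e' (QuotientAddGroup.mk z) = QuotientAddGroup.mk (jmap z)) := by
  refine ⟨Dmap_sub_id_comp_imap bt ct, ?_, ?_⟩
  · exact ⟨((Kmap bt ct).ker.equivMapOfInjective imap fun _ _ h => congrArg Prod.fst h).trans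
      (AddEquiv.addSubgroupCongr (ker_Dmap_sub_id bt ct).symm), fun _ => rfl⟩
  · have h_ker : ((QuotientAddGroup.mk' (Dmap bt ct - AddMonoidHom.id (Tot R S)).range).comp
        jmap).ker = (Kmap bt ct).range := by
      rw [← AddMonoidHom.comap_ker, QuotientAddGroup.ker_mk', comap_jmap_range_Dmap_sub_id]
    exact ⟨(QuotientAddGroup.quotientAddEquivOfEq h_ker.symm).trans
      (QuotientAddGroup.quotientKerEquivOfSurjective _ (surjective_mk_comp_jmap bt ct)),
      fun _ => rfl⟩

end Stmt10
end

section
/- Let G be an abelian group (written multiplicatively) and D : G → G an endomorphism. Realize the colimit L of the system G →^D G →^D ⋯ as equivalence classes of sequences (xᵢ)_{i≤0} that eventually satisfy D(xᵢ) = x_{i−1}, two sequences being equivalent if they eventually coincide, and let ι : G → L be the structural map at stage 0. Let β : L → L be the automorphism induced by D. Then ι restricts to an isomorphism from Ker(D − 1) onto Ker(β − 1), and ι induces an isomorphism from Coker(D − 1) onto Coker(β − 1). -/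
/-!
Since `β ∘ ι = ι ∘ D`, the map `ι` sends `Ker (D − 1)` into `Ker (β − 1)` and `Im (D − 1)` into
`Im (β − 1)`. A class fixed by `β` is represented by a sequence that is eventually constant with a
`D`-fixed value, so it is `ι` of that value; a `D`-fixed point killed by `ι` is killed by some
`D^N`, hence is zero. On cokernels, every `[y] ∈ L` has `β^N [y] = ι (y_N)` for large `N`, and
`β^N [y] ≡ [y]` modulo `Im (β − 1)`; conversely, if `ι g = (β − 1) [y]` then `D^N g = (D − 1) y_N`
for large `N`, and `D^N g ≡ g` modulo `Im (D − 1)` by telescoping.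
-/

namespace Stmt11

variable {G : Type*} [AddCommGroup G]

/-- Sequences `(xᵢ)_{i ≤ 0}` (indexed here by `n = −i ∈ ℕ`) which eventually satisfy
`D xᵢ = x_{i−1}`, i.e. `y (n+1) = D (y n)` for all large `n`. -/
def evSeq (D : G →+ G) : AddSubgroup (ℕ → G) where
  carrier := {y | ∃ N, ∀ n ≥ N, y (n + 1) = D (y n)}
  zero_mem' := ⟨0, fun n _ => by simp⟩
  add_mem' := by
    rintro a b ⟨N, hN⟩ ⟨M, hM⟩
    exact ⟨max N M, fun n hn => by
      simp [hN n (le_trans (le_max_left _ _) hn), hM n (le_trans (le_max_right _ _) hn)]⟩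
  neg_mem' := by
    rintro a ⟨N, hN⟩
    exact ⟨N, fun n hn => by simp [hN n hn]⟩

/-- Sequences which eventually coincide with `0`. -/
def evZero (D : G →+ G) : AddSubgroup ↥(evSeq D) where
  carrier := {y | ∃ N, ∀ n ≥ N, (y : ℕ → G) n = 0}
  zero_mem' := ⟨0, fun n _ => rfl⟩
  add_mem' := by
    rintro a b ⟨N, hN⟩ ⟨M, hM⟩
    exact ⟨max N M, fun n hn => by
      have h1 := hN n (le_trans (le_max_left _ _) hn)
      have h2 := hM n (le_trans (le_max_right _ _) hn)
      simp [AddSubgroup.coe_add, Pi.add_apply, h1, h2]⟩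
  neg_mem' := by
    rintro a ⟨N, hN⟩
    exact ⟨N, fun n hn => by simp [hN n hn]⟩

/-- The realization `L` of the colimit `colim (G →^D G →^D ⋯)`: eventually `D`-compatible
sequences modulo eventual equality. -/
def Lim (D : G →+ G) := ↥(evSeq D) ⧸ evZero D

noncomputable instance (D : G →+ G) : AddCommGroup (Lim D) :=
  QuotientAddGroup.Quotient.addCommGroup (evZero D)

/-- The structural map `ι : G → L` at stage `0`. -/
def iota (D : G →+ G) (g : G) : Lim D :=
  QuotientAddGroup.mk ⟨fun n => D^[n] g, 0, fun n _ => Function.iterate_succ_apply' D n g⟩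

/-- The endomorphism of `evSeq D` given by applying `D` pointwise. -/
def Dhat (D : G →+ G) : ↥(evSeq D) →+ ↥(evSeq D) :=
  AddMonoidHom.mk'
    (fun y => ⟨fun n => D (y.1 n), by
      obtain ⟨N, hN⟩ := y.2
      exact ⟨N, fun n hn => by simp only []; rw [hN n hn]⟩⟩)
    (fun a b => by
      apply Subtype.ext
      funext n
      simp)

/-- The map `β : L → L` induced by `D` (it satisfies `β ∘ ι = ι ∘ D`). -/
noncomputable def beta (D : G →+ G) : Lim D →+ Lim D :=
  QuotientAddGroup.map (evZero D) (evZero D) (Dhat D)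
    (by rintro y ⟨N, hN⟩; exact ⟨N, fun n hn => by simp [Dhat, hN n hn]⟩)

section SubId

variable {A B : Type*} [AddCommGroup A] [AddCommGroup B]

theorem iterate_sub_mem_range_sub_id (f : A →+ A) (n : ℕ) (x : A) :
    f^[n] x - x ∈ (f - AddMonoidHom.id A).range := by
  induction n with
  | zero => simp
  | succ n ih =>
    have hsplit : f^[n + 1] x - x = (f - AddMonoidHom.id A) (f^[n] x) + (f^[n] x - x) := by
      rw [Function.iterate_succ_apply', AddMonoidHom.sub_apply, AddMonoidHom.id_apply]
      abel
    exact hsplit ▸ add_mem ⟨_, rfl⟩ ih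

theorem mk_iterate_eq_mk (f : A →+ A) (n : ℕ) (x : A) :
    (QuotientAddGroup.mk (f^[n] x) : A ⧸ (f - AddMonoidHom.id A).range) = QuotientAddGroup.mk x :=
  QuotientAddGroup.eq_iff_sub_mem.2 (iterate_sub_mem_range_sub_id f n x)

variable {f : A →+ A} {g : B →+ B} {φ : A →+ B}

theorem mem_ker_sub_id {a : A} : a ∈ (f - AddMonoidHom.id A).ker ↔ f a = a := by
  rw [AddMonoidHom.mem_ker, AddMonoidHom.sub_apply, AddMonoidHom.id_apply, sub_eq_zero]

theorem ker_sub_id_le_comap (h : ∀ a, φ (f a) = g (φ a)) :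
    (f - AddMonoidHom.id A).ker ≤ (g - AddMonoidHom.id B).ker.comap φ := fun a ha => by
  rw [AddSubgroup.mem_comap, mem_ker_sub_id, ← h, mem_ker_sub_id.1 ha]

theorem range_sub_id_le_comap (h : ∀ a, φ (f a) = g (φ a)) :
    (f - AddMonoidHom.id A).range ≤ (g - AddMonoidHom.id B).range.comap φ := by
  rintro _ ⟨a, rfl⟩
  exact ⟨φ a, by simp [h]⟩

end SubId

theorem apply_add_eq_iterate {α : Type*} {f : α → α} {y : ℕ → α} {N : ℕ}
    (hy : ∀ n ≥ N, y (n + 1) = f (y n)) (m : ℕ) : y (N + m) = f^[m] (y N) := by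
  induction m with
  | zero => rfl
  | succ m ih => rw [← add_assoc, hy _ (Nat.le_add_right N m), ih, Function.iterate_succ_apply']

namespace Lim

variable (D : G →+ G)

noncomputable def mk : evSeq D →+ Lim D := QuotientAddGroup.mk' (evZero D)

theorem mk_surjective : Function.Surjective (mk D) := QuotientAddGroup.mk'_surjective _

variable {D}

theorem mk_eq_mk_iff {y z : evSeq D} :
    mk D y = mk D z ↔ ∃ N, ∀ n ≥ N, (y : ℕ → G) n = (z : ℕ → G) n := by
  refine QuotientAddGroup.eq.trans (exists_congr fun N => forall₂_congr fun n _ => ?_)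
  change -(y : ℕ → G) n + (z : ℕ → G) n = 0 ↔ _
  rw [neg_add_eq_zero]

end Lim

open Lim

section Colimit

variable {D : G →+ G}

theorem iota_eq_mk_iff {g : G} {y : evSeq D} :
    iota D g = mk D y ↔ ∃ N, ∀ n ≥ N, D^[n] g = (y : ℕ → G) n :=
  mk_eq_mk_iff

variable (D) in
noncomputable def iotaHom : G →+ Lim D where
  toFun := iota D
  map_zero' := (iota_eq_mk_iff.2 ⟨0, fun n _ => iterate_map_zero D n⟩).trans (map_zero _)
  map_add' g h := (iota_eq_mk_iff.2 ⟨0, fun n _ => iterate_map_add D n g h⟩).trans (map_add _ _ _)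

theorem beta_mk (y : evSeq D) : beta D (mk D y) = mk D (Dhat D y) := rfl

theorem Dhat_iterate_apply (k : ℕ) (y : evSeq D) (n : ℕ) :
    ((Dhat D)^[k] y : ℕ → G) n = D^[k] ((y : ℕ → G) n) := by
  induction k with
  | zero => rfl
  | succ k ih => simp only [Function.iterate_succ_apply', ← ih]; rfl

theorem beta_iterate_mk (k : ℕ) (y : evSeq D) :
    (beta D)^[k] (mk D y) = mk D ((Dhat D)^[k] y) := by
  induction k with
  | zero => rfl
  | succ k ih => rw [Function.iterate_succ_apply', Function.iterate_succ_apply', ih, beta_mk]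

theorem beta_iota (g : G) : beta D (iota D g) = iota D (D g) :=
  (iota_eq_mk_iff.2 ⟨0, fun n _ =>
    (Function.iterate_succ_apply D n g).symm.trans (Function.iterate_succ_apply' D n g)⟩).symm

theorem eq_zero_of_iota_eq_zero {g : G} (hg : D g = g) (h : iota D g = 0) : g = 0 := by
  rw [← map_zero (mk D), iota_eq_mk_iff] at h
  obtain ⟨N, hN⟩ := h
  simpa [Function.iterate_fixed hg] using hN N le_rfl

theorem exists_fixed_iota_eq {x : Lim D} (hx : beta D x = x) : ∃ g, D g = g ∧ iota D g = x := by
  obtain ⟨y, rfl⟩ := mk_surjective D x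
  obtain ⟨M, hM⟩ := mk_eq_mk_iff.1 hx
  obtain ⟨N, hN⟩ := y.2
  set K := max M N
  have hfix : D ((y : ℕ → G) K) = (y : ℕ → G) K := hM K (le_max_left M N)
  have hy : ∀ n ≥ K, (y : ℕ → G) (n + 1) = D ((y : ℕ → G) n) :=
    fun n hn => hN n (le_of_max_le_right hn)
  refine ⟨(y : ℕ → G) K, hfix, iota_eq_mk_iff.2 ⟨K, fun n hn => ?_⟩⟩
  obtain ⟨m, rfl⟩ := Nat.exists_eq_add_of_le hn
  rw [apply_add_eq_iterate hy, Function.iterate_fixed hfix, Function.iterate_fixed hfix]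

theorem mem_range_sub_id_of_iota_mem {g : G}
    (h : iota D g ∈ (beta D - AddMonoidHom.id (Lim D)).range) :
    g ∈ (D - AddMonoidHom.id G).range := by
  obtain ⟨x, hx⟩ := h
  obtain ⟨y, rfl⟩ := mk_surjective D x
  rw [AddMonoidHom.sub_apply, AddMonoidHom.id_apply, beta_mk, ← map_sub, eq_comm,
    iota_eq_mk_iff] at hx
  obtain ⟨N, hN⟩ := hx
  have hDN : D^[N] g ∈ (D - AddMonoidHom.id G).range := ⟨(y : ℕ → G) N, (hN N le_rfl).symm⟩
  simpa using sub_mem hDN (iterate_sub_mem_range_sub_id D N g)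

theorem exists_beta_iterate_eq_iota (x : Lim D) : ∃ N g, (beta D)^[N] x = iota D g := by
  obtain ⟨y, rfl⟩ := mk_surjective D x
  obtain ⟨N, hN⟩ := y.2
  refine ⟨N, (y : ℕ → G) N, ?_⟩
  rw [beta_iterate_mk, eq_comm, iota_eq_mk_iff]
  refine ⟨N, fun n hn => ?_⟩
  obtain ⟨m, rfl⟩ := Nat.exists_eq_add_of_le hn
  rw [Dhat_iterate_apply, apply_add_eq_iterate hN, ← Function.iterate_add_apply, add_comm]

variable (D)

noncomputable def iotaKer :
    (D - AddMonoidHom.id G).ker →+ (beta D - AddMonoidHom.id (Lim D)).ker :=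
  ((iotaHom D).domRestrict _).codRestrict (beta D - AddMonoidHom.id (Lim D)).ker fun a =>
    ker_sub_id_le_comap (φ := iotaHom D) (fun b => (beta_iota b).symm) a.2

noncomputable def iotaCoker :
    G ⧸ (D - AddMonoidHom.id G).range →+ Lim D ⧸ (beta D - AddMonoidHom.id (Lim D)).range :=
  QuotientAddGroup.map _ _ (iotaHom D) (range_sub_id_le_comap fun a => (beta_iota a).symm)

theorem iotaKer_bijective : Function.Bijective (iotaKer D) := by
  refine ⟨(injective_iff_map_eq_zero _).2 fun g hg => ?_, fun x => ?_⟩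
  · exact Subtype.ext (eq_zero_of_iota_eq_zero (mem_ker_sub_id.1 g.2) (congrArg Subtype.val hg))
  · obtain ⟨g, hg, hgx⟩ := exists_fixed_iota_eq (mem_ker_sub_id.1 x.2)
    exact ⟨⟨g, mem_ker_sub_id.2 hg⟩, Subtype.ext hgx⟩

theorem iotaCoker_bijective : Function.Bijective (iotaCoker D) := by
  refine ⟨(injective_iff_map_eq_zero _).2 fun q => ?_, fun q => ?_⟩
  · induction q using QuotientAddGroup.induction_on with | H g => ?_
    intro hg
    exact (QuotientAddGroup.eq_zero_iff g).2
      (mem_range_sub_id_of_iota_mem ((QuotientAddGroup.eq_zero_iff _).1 hg))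
  · induction q using QuotientAddGroup.induction_on with | H x => ?_
    obtain ⟨N, g, hg⟩ := exists_beta_iterate_eq_iota x
    exact ⟨g, (congrArg QuotientAddGroup.mk hg.symm).trans (mk_iterate_eq_mk _ N x)⟩

end Colimit

/-- `ι` restricts to an isomorphism `Ker (D − 1) ≅ Ker (β − 1)` and induces
an isomorphism `Coker (D − 1) ≅ Coker (β − 1)`. -/
theorem stmt_11 (D : G →+ G) :
    (∃ e : (D - AddMonoidHom.id G).ker ≃+ (beta D - AddMonoidHom.id (Lim D)).ker,
      ∀ g : (D - AddMonoidHom.id G).ker, (e g : Lim D) = iota D (g : G)) ∧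
    (∃ e' : G ⧸ (D - AddMonoidHom.id G).range ≃+
        Lim D ⧸ (beta D - AddMonoidHom.id (Lim D)).range,
      ∀ g : G, e' (QuotientAddGroup.mk g) = QuotientAddGroup.mk (iota D g)) :=
  ⟨⟨AddEquiv.ofBijective _ (iotaKer_bijective D), fun _ => rfl⟩,
    ⟨AddEquiv.ofBijective _ (iotaCoker_bijective D), fun _ => rfl⟩⟩

end Stmt11
end

section
/- Let R be a ring and 𝒮 a sublattice of the lattice of two-sided ideals of R, closed under arbitrary intersections, containing {0} and R, and such that every I ∈ 𝒮 equals the intersection of all 𝒮-prime ideals containing it. Then the sets W(I) = { 𝔭 ∈ Spec_𝒮(R) : I ⊄ 𝔭 }, for I ∈ 𝒮, form a topology on Spec_𝒮(R), and the assignment U ↦ ⋂_{𝔭 ∈ Uᶜ} 𝔭 is a lattice isomorphism from the lattice of open sets of Spec_𝒮(R) onto 𝒮, with inverse I ↦ W(I). -/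
/-- An `𝒮`-prime ideal: a member `𝔭 ≠ R` of `𝒮` such that for all `I, J ∈ 𝒮`,
`IJ ⊆ 𝔭` implies `I ⊆ 𝔭` or `J ⊆ 𝔭`. -/
def SPrime {R : Type*} [Ring R] (S : Set (TwoSidedIdeal R)) (p : TwoSidedIdeal R) : Prop :=
  p ∈ S ∧ p ≠ ⊤ ∧
    ∀ I ∈ S, ∀ J ∈ S, (∀ a ∈ I, ∀ b ∈ J, a * b ∈ p) → I ≤ p ∨ J ≤ p

/-!
The closed sets of `Spec_𝒮(R)` are the loci `{𝔭 : I ⊆ 𝔭}`, and an ideal can be recovered from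
its locus as the intersection of the `𝒮`-primes containing it (its hull), which by hypothesis
is the ideal itself. So `W` and `U ↦ ⋂_{𝔭 ∉ U} 𝔭` are mutually inverse, and `W` reflects the
order because `W(I) ⊆ W(J)` says exactly that `I` lies in the hull of `J`. Finite
intersections of basic opens are basic by `𝒮`-primality; an arbitrary union of basic opens
`W(I)` is the basic open of the hull of `⨆ I`, which lies in `𝒮` as an intersection of members.
-/

namespace SSpec

variable {R : Type*} [Ring R] (S : Set (TwoSidedIdeal R))

def basicOpen (I : TwoSidedIdeal R) : Set {p : TwoSidedIdeal R // SPrime S p} :=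
  {p | ¬ I ≤ p.1}

def vanishingIdeal (t : Set {p : TwoSidedIdeal R // SPrime S p}) : TwoSidedIdeal R :=
  sInf {q | ∃ p : {p : TwoSidedIdeal R // SPrime S p}, p.1 = q ∧ p ∈ t}

def hull (I : TwoSidedIdeal R) : TwoSidedIdeal R :=
  sInf {p | SPrime S p ∧ I ≤ p}

variable {S}

lemma le_hull (I : TwoSidedIdeal R) : I ≤ hull S I :=
  le_sInf fun _ hp => hp.2

lemma hull_mem (hinf : ∀ T : Set (TwoSidedIdeal R), T ⊆ S → sInf T ∈ S) (I : TwoSidedIdeal R) :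
    hull S I ∈ S :=
  hinf _ fun _ hp => hp.1.1

lemma vanishingIdeal_compl_basicOpen (I : TwoSidedIdeal R) :
    vanishingIdeal S (basicOpen S I)ᶜ = hull S I := by
  refine congrArg sInf (Set.ext fun q => ⟨?_, fun ⟨hq, hIq⟩ => ⟨⟨q, hq⟩, rfl, not_not.2 hIq⟩⟩)
  rintro ⟨p, rfl, hp⟩
  exact ⟨p.2, not_not.1 hp⟩

lemma basicOpen_subset_basicOpen_iff {I J : TwoSidedIdeal R} :
    basicOpen S I ⊆ basicOpen S J ↔ I ≤ hull S J := by
  constructor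
  · intro h
    refine le_sInf fun q ⟨hq, hJq⟩ => ?_
    by_contra hIq
    exact h (show (⟨q, hq⟩ : {p // SPrime S p}) ∈ basicOpen S I from hIq) hJq
  · intro h p hIp hJp
    exact hIp (h.trans (sInf_le ⟨p.2, hJp⟩))

lemma basicOpen_hull (I : TwoSidedIdeal R) : basicOpen S (hull S I) = basicOpen S I :=
  (basicOpen_subset_basicOpen_iff.2 le_rfl).antisymm
    (basicOpen_subset_basicOpen_iff.2 ((le_hull I).trans (le_hull _)))

lemma basicOpen_top : basicOpen S (⊤ : TwoSidedIdeal R) = Set.univ :=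
  Set.eq_univ_of_forall fun p h => p.2.2.1 (top_le_iff.1 h)

lemma basicOpen_inf {I J : TwoSidedIdeal R} (hI : I ∈ S) (hJ : J ∈ S) :
    basicOpen S (I ⊓ J) = basicOpen S I ∩ basicOpen S J := by
  ext p
  refine ⟨fun h => ⟨fun hI' => h (inf_le_left.trans hI'), fun hJ' => h (inf_le_right.trans hJ')⟩,
    fun ⟨hIp, hJp⟩ h => ?_⟩
  have hprod : ∀ a ∈ I, ∀ b ∈ J, a * b ∈ p.1 := fun a ha b hb =>
    h ((TwoSidedIdeal.mem_inf R).2 ⟨I.mul_mem_right a b ha, J.mul_mem_left a b hb⟩)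
  exact (p.2.2.2 I hI J hJ hprod).elim hIp hJp

lemma basicOpen_sSup (T : Set (TwoSidedIdeal R)) :
    basicOpen S (sSup T) = ⋃ I ∈ T, basicOpen S I := by
  ext p
  simp only [basicOpen, Set.mem_ofPred_eq, Set.mem_iUnion, exists_prop, sSup_le_iff, not_forall]

variable (S)

abbrev zariskiTopology (hinf : ∀ T : Set (TwoSidedIdeal R), T ⊆ S → sInf T ∈ S) :
    TopologicalSpace {p : TwoSidedIdeal R // SPrime S p} where
  IsOpen U := ∃ I ∈ S, U = basicOpen S I
  isOpen_univ := ⟨sInf ∅, hinf ∅ (Set.empty_subset S), by rw [sInf_empty, basicOpen_top]⟩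
  isOpen_inter := by
    rintro _ _ ⟨I, hI, rfl⟩ ⟨J, hJ, rfl⟩
    refine ⟨I ⊓ J, ?_, (basicOpen_inf hI hJ).symm⟩
    simpa only [sInf_pair] using hinf {I, J} (Set.pair_subset hI hJ)
  isOpen_sUnion := by
    intro 𝒰 h𝒰
    let T := {I | I ∈ S ∧ basicOpen S I ∈ 𝒰}
    refine ⟨hull S (sSup T), hull_mem hinf _, ?_⟩
    rw [basicOpen_hull, basicOpen_sSup]
    ext p
    simp only [Set.mem_sUnion, Set.mem_iUnion, exists_prop]
    constructor
    · rintro ⟨U, hU, hpU⟩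
      obtain ⟨I, hI, rfl⟩ := h𝒰 U hU
      exact ⟨I, ⟨hI, hU⟩, hpU⟩
    · rintro ⟨I, ⟨-, hU⟩, hpI⟩
      exact ⟨_, hU, hpI⟩

def opensOrderIso (hinf : ∀ T : Set (TwoSidedIdeal R), T ⊆ S → sInf T ∈ S)
    (hker : ∀ I ∈ S, I = hull S I) :
    {U : Set {p : TwoSidedIdeal R // SPrime S p} // @IsOpen _ (zariskiTopology S hinf) U} ≃o
      {I : TwoSidedIdeal R // I ∈ S} where
  toFun U := ⟨vanishingIdeal S U.1ᶜ, hinf _ fun _ ⟨p, hp, _⟩ => hp ▸ p.2.1⟩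
  invFun I := ⟨basicOpen S I.1, I.1, I.2, rfl⟩
  left_inv := by
    rintro ⟨_, I, -, rfl⟩
    exact Subtype.ext ((congrArg _ (vanishingIdeal_compl_basicOpen I)).trans (basicOpen_hull I))
  right_inv := by
    rintro ⟨I, hI⟩
    exact Subtype.ext ((vanishingIdeal_compl_basicOpen I).trans (hker I hI).symm)
  map_rel_iff' := by
    rintro ⟨_, I, hI, rfl⟩ ⟨_, J, hJ, rfl⟩
    change vanishingIdeal S _ ≤ vanishingIdeal S _ ↔ basicOpen S I ⊆ basicOpen S J
    rw [vanishingIdeal_compl_basicOpen, vanishingIdeal_compl_basicOpen, ← hker I hI, ← hker J hJ,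
      basicOpen_subset_basicOpen_iff, ← hker J hJ]

end SSpec

theorem stmt_14_general {R : Type*} [Ring R] (S : Set (TwoSidedIdeal R))
    (hinf : ∀ T : Set (TwoSidedIdeal R), T ⊆ S → sInf T ∈ S)
    (hker : ∀ I ∈ S, I = sInf {p : TwoSidedIdeal R | SPrime S p ∧ I ≤ p}) :
    ∃ t : TopologicalSpace {p : TwoSidedIdeal R // SPrime S p},
      (∀ U : Set {p : TwoSidedIdeal R // SPrime S p},
        @IsOpen _ t U ↔ ∃ I ∈ S, U = {p | ¬ I ≤ p.1}) ∧
      ∃ e : {U : Set {p : TwoSidedIdeal R // SPrime S p} // @IsOpen _ t U} ≃o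
          {I : TwoSidedIdeal R // I ∈ S},
        (∀ U, (e U : TwoSidedIdeal R) = sInf {q : TwoSidedIdeal R |
            ∃ p : {p : TwoSidedIdeal R // SPrime S p}, p.1 = q ∧ p ∉ U.1}) ∧
        (∀ I, ((e.symm I : Set {p : TwoSidedIdeal R // SPrime S p}) =
            {p | ¬ (I : TwoSidedIdeal R) ≤ p.1})) :=
  ⟨SSpec.zariskiTopology S hinf, fun _ => Iff.rfl, SSpec.opensOrderIso S hinf hker,
    fun _ => rfl, fun _ => rfl⟩

/-- for a sublattice `𝒮` of the ideal lattice of `R`, closed under arbitrary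
intersections, containing `{0}` and `R`, in which every member is an intersection of
`𝒮`-primes, the sets `W(I) = {𝔭 : I ⊄ 𝔭}` form a topology on `Spec_𝒮(R)`, and
`U ↦ ⋂_{𝔭 ∈ Uᶜ} 𝔭` is a lattice (order) isomorphism from the open sets onto `𝒮`,
with inverse `I ↦ W(I)`. -/
theorem stmt_14 {R : Type*} [Ring R] (S : Set (TwoSidedIdeal R))
    (hbot : ⊥ ∈ S) (htop : ⊤ ∈ S)
    (hsup : ∀ I ∈ S, ∀ J ∈ S, I ⊔ J ∈ S)
    (hinf : ∀ T : Set (TwoSidedIdeal R), T ⊆ S → sInf T ∈ S)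
    (hker : ∀ I ∈ S, I = sInf {p : TwoSidedIdeal R | SPrime S p ∧ I ≤ p}) :
    ∃ t : TopologicalSpace {p : TwoSidedIdeal R // SPrime S p},
      (∀ U : Set {p : TwoSidedIdeal R // SPrime S p},
        @IsOpen _ t U ↔ ∃ I ∈ S, U = {p | ¬ I ≤ p.1}) ∧
      ∃ e : {U : Set {p : TwoSidedIdeal R // SPrime S p} // @IsOpen _ t U} ≃o
          {I : TwoSidedIdeal R // I ∈ S},
        (∀ U, (e U : TwoSidedIdeal R) = sInf {q : TwoSidedIdeal R |
            ∃ p : {p : TwoSidedIdeal R // SPrime S p}, p.1 = q ∧ p ∉ U.1}) ∧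
        (∀ I, ((e.symm I : Set {p : TwoSidedIdeal R // SPrime S p}) =
            {p | ¬ (I : TwoSidedIdeal R) ≤ p.1})) :=
  stmt_14_general S hinf hker
end

section
/- Consider a commutative diagram of abelian groups with exact rows 0 → ℤ^{H∖S} → ℤ^{R} → ℤ^{(E⁰∖H)∖S'} → 0 and 0 → ℤ^{H} → ℤ^{E⁰} → ℤ^{E⁰∖H} → 0 (horizontal maps: inclusion followed by projection), and vertical maps A_{E_H}ᵗ − I, A_Eᵗ − I, A_{E/H}ᵗ − I respectively, where A_E = [[A_{E_H}, 0],[X, A_{E/H}]] is the block decomposition of the adjacency matrix with respect to E⁰ = H ⊔ (E⁰∖H). Then the Snake Lemma yields a six-term exact sequence Ker(A_{E_H}ᵗ−I) → Ker(A_Eᵗ−I) → Ker(A_{E/H}ᵗ−I) →^δ Coker(A_{E_H}ᵗ−I) → Coker(A_Eᵗ−I) → Coker(A_{E/H}ᵗ−I), and the connecting map δ is given explicitly by δ(x) = [Xᵗ x]. -/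
namespace Stmt16

open Finsupp

variable {V : Type*}

section Maps

variable (H S S' : Set V)

/-- Inclusion `ℤ^{H∖S} → ℤ^{R}` (where `R = Sᶜ` is the set of non-sinks). -/
noncomputable def inc1 : (↥(H \ S) →₀ ℤ) →+ (↥Sᶜ →₀ ℤ) :=
  Finsupp.mapDomain.addMonoidHom (fun x => (⟨x.1, x.2.2⟩ : ↥Sᶜ))

/-- Projection `ℤ^{R} → ℤ^{(E⁰∖H)∖S'}`, using `(E⁰∖S)∖(H∖S) = (E⁰∖H)∖S'`. -/
noncomputable def pr1 (hRQ : (Sᶜ \ (H \ S) : Set V) = Hᶜ \ S') :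
    (↥Sᶜ →₀ ℤ) →+ (↥(Hᶜ \ S') →₀ ℤ) :=
  Finsupp.comapDomain.addMonoidHom
    (f := fun x : ↥(Hᶜ \ S') => (⟨x.1, by
      have : (x : V) ∈ Sᶜ \ (H \ S) := by rw [hRQ]; exact x.2
      exact this.1⟩ : ↥Sᶜ))
    (fun a b hab => by
      apply Subtype.ext
      have := congrArg Subtype.val hab
      simpa using this)

/-- Inclusion `ℤ^{H} → ℤ^{E⁰}`. -/
noncomputable def inc2 : (↥H →₀ ℤ) →+ (V →₀ ℤ) :=
  Finsupp.mapDomain.addMonoidHom Subtype.val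

/-- Projection `ℤ^{E⁰} → ℤ^{E⁰∖H}`. -/
noncomputable def pr2 : (V →₀ ℤ) →+ (↥Hᶜ →₀ ℤ) :=
  Finsupp.comapDomain.addMonoidHom (f := (Subtype.val : ↥Hᶜ → V)) Subtype.val_injective

/-- Restriction `ℤ^{E⁰} → ℤ^{H}` to the coordinates in `H` (used to express the
connecting map `δ(x) = [Xᵗ x]`). -/
noncomputable def prH : (V →₀ ℤ) →+ (↥H →₀ ℤ) :=
  Finsupp.comapDomain.addMonoidHom (f := (Subtype.val : ↥H → V)) Subtype.val_injective

/-- Inclusion `ℤ^{(E⁰∖H)∖S'} → ℤ^{R}`, a set-theoretic section of `pr1`. -/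
noncomputable def incQ (hRQ : (Sᶜ \ (H \ S) : Set V) = Hᶜ \ S') :
    (↥(Hᶜ \ S') →₀ ℤ) →+ (↥Sᶜ →₀ ℤ) :=
  Finsupp.mapDomain.addMonoidHom (fun x : ↥(Hᶜ \ S') => (⟨x.1, by
      have : (x : V) ∈ Sᶜ \ (H \ S) := by rw [hRQ]; exact x.2
      exact this.1⟩ : ↥Sᶜ))

/-- The middle vertical map `A_Eᵗ − I : ℤ^{R} → ℤ^{E⁰}`, where `A w : V →₀ ℤ` is the
(finitely supported) row of the transposed adjacency matrix at the non-sink `w`. -/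
noncomputable def Tmid (A : ↥Sᶜ → (V →₀ ℤ)) : (↥Sᶜ →₀ ℤ) →+ (V →₀ ℤ) :=
  Finsupp.liftAddHom fun w => zmultiplesHom _ (A w - Finsupp.single (w : V) 1)

/-- The left vertical map `A_{E_H}ᵗ − I : ℤ^{H∖S} → ℤ^{H}` (well defined since `H` is
hereditary). -/
noncomputable def TH (A : ↥Sᶜ → (V →₀ ℤ))
    (hher : ∀ w : ↥Sᶜ, (w : V) ∈ H → ∀ v ∈ (A w).support, v ∈ H) :
    (↥(H \ S) →₀ ℤ) →+ (↥H →₀ ℤ) :=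
  Finsupp.liftAddHom fun w => zmultiplesHom _
    ((prH H) (A ⟨w.1, w.2.2⟩) - Finsupp.single (⟨w.1, w.2.1⟩ : ↥H) 1)

/-- The right vertical map `A_{E/H}ᵗ − I : ℤ^{(E⁰∖H)∖S'} → ℤ^{E⁰∖H}`. -/
noncomputable def TQ (hRQ : (Sᶜ \ (H \ S) : Set V) = Hᶜ \ S') (A : ↥Sᶜ → (V →₀ ℤ)) :
    (↥(Hᶜ \ S') →₀ ℤ) →+ (↥Hᶜ →₀ ℤ) :=
  Finsupp.liftAddHom fun w => zmultiplesHom _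
    ((pr2 H) (A ⟨w.1, by
        have : (w : V) ∈ Sᶜ \ (H \ S) := by rw [hRQ]; exact w.2
        exact this.1⟩) - Finsupp.single (⟨w.1, w.2.1⟩ : ↥Hᶜ) 1)

end Maps

lemma comap_map {α β : Type*} {f : α → β} (hf : Function.Injective f) (l : α →₀ ℤ) :
    Finsupp.comapDomain f (Finsupp.mapDomain f l) hf.injOn = l := by
  ext a
  rw [Finsupp.comapDomain_apply, Finsupp.mapDomain_apply hf]

/-- the commutative diagram with exact rows
`0 → ℤ^{H∖S} → ℤ^{R} → ℤ^{(E⁰∖H)∖S'} → 0`, `0 → ℤ^{H} → ℤ^{E⁰} → ℤ^{E⁰∖H} → 0` and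
vertical maps `A_{E_H}ᵗ − I`, `A_Eᵗ − I`, `A_{E/H}ᵗ − I` yields, by the Snake Lemma, a
six-term exact sequence of kernels and cokernels, whose connecting map is given
explicitly by `δ(x) = [Xᵗ x]` (the class of the `H`-part of `(A_Eᵗ − I)` applied to the
lift of `x`). -/
theorem stmt_16 (H S S' : Set V) (hRQ : (Sᶜ \ (H \ S) : Set V) = Hᶜ \ S')
    (A : ↥Sᶜ → (V →₀ ℤ))
    (hher : ∀ w : ↥Sᶜ, (w : V) ∈ H → ∀ v ∈ (A w).support, v ∈ H)
    -- exact rows: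
    (hinc1 : Function.Injective (inc1 H S)) (hpr1 : Function.Surjective (pr1 H S S' hRQ))
    (hex1 : Function.Exact (inc1 H S) (pr1 H S S' hRQ))
    (hinc2 : Function.Injective (inc2 H)) (hpr2 : Function.Surjective (pr2 H))
    (hex2 : Function.Exact (inc2 H) (pr2 H))
    -- commutativity of the diagram:
    (hcomm1 : (Tmid S A).comp (inc1 H S) = (inc2 H).comp (TH H S A hher))
    (hcomm2 : (TQ H S S' hRQ A).comp (pr1 H S S' hRQ) = (pr2 H).comp (Tmid S A)) :
    ∃ δ : (TQ H S S' hRQ A).ker →+ (↥H →₀ ℤ) ⧸ (TH H S A hher).range,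
      -- the explicit formula δ(x) = [Xᵗ x]:
      (∀ z : (TQ H S S' hRQ A).ker,
        δ z = QuotientAddGroup.mk ((prH H) ((Tmid S A) ((incQ H S S' hRQ) (z : _))))) ∧
      -- exactness at Ker(A_Eᵗ − I):
      (∀ x : ↥Sᶜ →₀ ℤ, Tmid S A x = 0 →
        ((pr1 H S S' hRQ) x = 0 ↔ ∃ y, TH H S A hher y = 0 ∧ inc1 H S y = x)) ∧
      -- exactness at Ker(A_{E/H}ᵗ − I):
      (∀ z : (TQ H S S' hRQ A).ker,
        (δ z = 0 ↔ ∃ x, Tmid S A x = 0 ∧ (pr1 H S S' hRQ) x = (z : _))) ∧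
      -- exactness at Coker(A_{E_H}ᵗ − I):
      (∀ a : ↥H →₀ ℤ,
        ((QuotientAddGroup.mk ((inc2 H) a) : (V →₀ ℤ) ⧸ (Tmid S A).range) = 0 ↔
          ∃ z : (TQ H S S' hRQ A).ker, δ z = QuotientAddGroup.mk a)) ∧
      -- exactness at Coker(A_Eᵗ − I):
      (∀ b : V →₀ ℤ,
        ((QuotientAddGroup.mk ((pr2 H) b) : (↥Hᶜ →₀ ℤ) ⧸ (TQ H S S' hRQ A).range) = 0 ↔
          ∃ a : ↥H →₀ ℤ,
            (QuotientAddGroup.mk ((inc2 H) a) : (V →₀ ℤ) ⧸ (Tmid S A).range) =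
              QuotientAddGroup.mk b)) := by

  -- abbreviations
  set i1 := inc1 H S with hi1
  set p1 := pr1 H S S' hRQ with hp1
  set i2 := inc2 H with hi2
  set p2 := pr2 H with hp2
  set pH := prH H with hpH
  set iQ := incQ H S S' hRQ with hiQ
  set Tm := Tmid S A with hTm
  set Th := TH H S A hher with hTh
  set Tq := TQ H S S' hRQ A with hTq
  -- sections
  have hsec1 : ∀ z, p1 (iQ z) = z := by
    intro z
    exact comap_map (fun a b hab => Subtype.ext (by simpa using congrArg Subtype.val hab)) z
  have hsecH : ∀ a, pH (i2 a) = a := by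
    intro a
    exact comap_map Subtype.val_injective a
  -- commutativity pointwise
  have hc1 : ∀ y, Tm (i1 y) = i2 (Th y) := fun y => congrFun (congrArg DFunLike.coe hcomm1) y
  have hc2 : ∀ x, Tq (p1 x) = p2 (Tm x) := fun x => congrFun (congrArg DFunLike.coe hcomm2) x
  -- key: for z in ker Tq, Tm (iQ z) lies in the image of i2 and equals i2 (pH (Tm (iQ z)))
  have hkey : ∀ z : Tq.ker, i2 (pH (Tm (iQ (z : _)))) = Tm (iQ (z : _)) := by
    intro z
    have h0 : p2 (Tm (iQ (z : _))) = 0 := by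
      rw [← hc2, hsec1]
      exact z.2
    obtain ⟨a, ha⟩ := (hex2 _).1 h0
    rw [← ha, hsecH]
  refine ⟨((QuotientAddGroup.mk' Th.range).comp
      ((pH.comp (Tm.comp iQ)).comp Tq.ker.subtype)), fun z => rfl, ?_, ?_, ?_, ?_⟩
  · -- exactness at Ker(Tmid)
    intro x hx
    constructor
    · intro hp
      obtain ⟨y, hy⟩ := (hex1 x).1 hp
      refine ⟨y, ?_, hy⟩
      apply hinc2
      rw [← hc1, hy, hx, map_zero]
    · rintro ⟨y, -, rfl⟩
      exact (hex1 _).2 ⟨y, rfl⟩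
  · -- exactness at Ker(TQ)
    intro z
    constructor
    · intro hδ
      have : pH (Tm (iQ (z : _))) ∈ Th.range := (QuotientAddGroup.eq_zero_iff _).1 hδ
      obtain ⟨y, hy⟩ := this
      refine ⟨iQ (z : _) - i1 y, ?_, by rw [map_sub, hsec1, (hex1 _).2 ⟨y, rfl⟩, sub_zero]⟩
      rw [map_sub, hc1, hy, hkey z, sub_self]
    · rintro ⟨x, hx0, hxz⟩
      have h1 : p1 (iQ (z : _) - x) = 0 := by rw [map_sub, hsec1, hxz, sub_self]
      obtain ⟨y, hy⟩ := (hex1 _).1 h1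
      have h2 : Tm (iQ (z : _)) = i2 (Th y) := by
        rw [← hc1, hy, map_sub, hx0, sub_zero]
      show (QuotientAddGroup.mk (pH (Tm (iQ (z : _)))) : _ ⧸ Th.range) = 0
      rw [QuotientAddGroup.eq_zero_iff, h2, hsecH]
      exact ⟨y, rfl⟩
  · -- exactness at Coker(TH)
    intro a
    constructor
    · intro h0
      obtain ⟨x, hx⟩ := (QuotientAddGroup.eq_zero_iff _).1 h0
      have hz : Tq (p1 x) = 0 := by
        rw [hc2, hx, (hex2 _).2 ⟨a, rfl⟩]
      refine ⟨⟨p1 x, hz⟩, ?_⟩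
      have h1 : p1 (iQ (p1 x) - x) = 0 := by rw [map_sub, hsec1, sub_self]
      obtain ⟨y, hy⟩ := (hex1 _).1 h1
      have h2 : Tm (iQ (p1 x)) = i2 (a + Th y) := by
        have : iQ (p1 x) = x + i1 y := by rw [hy]; abel
        rw [this, map_add, hx, hc1, map_add]
      show (QuotientAddGroup.mk (pH (Tm (iQ (p1 x)))) : _ ⧸ Th.range) = QuotientAddGroup.mk a
      rw [h2, hsecH, QuotientAddGroup.eq]
      refine ⟨-y, ?_⟩
      rw [map_neg]
      abel
    · rintro ⟨z, hz⟩
      have : -(pH (Tm (iQ (z : _)))) + a ∈ Th.range := (QuotientAddGroup.eq).1 hz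
      obtain ⟨y, hy⟩ := this
      rw [QuotientAddGroup.eq_zero_iff]
      refine ⟨iQ (z : _) + i1 y, ?_⟩
      rw [map_add, hc1, hy, map_add, map_neg, hkey z]
      abel
  · -- exactness at Coker(Tmid)
    intro b
    constructor
    · intro h0
      obtain ⟨w, hw⟩ := (QuotientAddGroup.eq_zero_iff _).1 h0
      obtain ⟨u, hu⟩ := hpr1 w
      have h1 : p2 (b - Tm u) = 0 := by
        rw [map_sub, ← hc2, hu, hw, sub_self]
      obtain ⟨a, ha⟩ := (hex2 _).1 h1
      refine ⟨a, ?_⟩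
      rw [QuotientAddGroup.eq, ha]
      exact ⟨u, by abel⟩
    · rintro ⟨a, ha⟩
      obtain ⟨x, hx⟩ := (QuotientAddGroup.eq).1 ha
      rw [QuotientAddGroup.eq_zero_iff]
      refine ⟨p1 x, ?_⟩
      rw [hc2, hx, map_add, map_neg, (hex2 _).2 ⟨a, rfl⟩]
      abel


end Stmt16
end
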